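/- arXiv:1902.00204 — 12 statements merged into one kernel-verified Lean document; each statement's English description precedes it below -/
import Mathlib

section
/- Let G be a finite simple graph and let V_1, …, V_k be a partition of V(G) such that for every i ∈ {1, …, k} the subgraph of G induced by V_i is a D graph for the Maker–Breaker total domination game. Then G is a D graph. -/
/-!
Dominator answers every move of Staller inside the part where it was made, following his winning
strategy for the S-game on that part. If that strategy has no answer (the part is full) or answers
with a vertex he already owns, he plays an arbitrary free vertex; his first move in the D-game is
also arbitrary. Such extra vertices never hurt a player whose goal is monotone, so in every part
Dominator keeps an imagined subset of his vertices that is winning there. At the end each part is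
totally dominated, and the parts cover `V`.
-/

namespace MBTD

variable {V : Type*} [Fintype V] [DecidableEq V]

/-- `a` is a total dominating set of `G`: every vertex has a neighbour in `a`. -/
def IsTotalDomSet (G : SimpleGraph V) (a : Finset V) : Prop :=
  ∀ v : V, ∃ u ∈ a, G.Adj u v

/-- `WinsAux win n turn a b` describes the generic positional game in which two players
alternately claim previously unclaimed vertices until every vertex is claimed.
Here `a` is the set of vertices claimed so far by the tracked player, `b` the set claimed by
the opponent, `turn = true` iff the tracked player is the next to move, and `n` is the number
of moves still to be played.  The tracked player wins iff `win` holds of the final position. -/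
def WinsAux (win : Finset V → Finset V → Prop) : ℕ → Bool → Finset V → Finset V → Prop
  | 0, _, a, b => win a b
  | n + 1, true, a, b => ∃ v ∈ Finset.univ \ (a ∪ b), WinsAux win n false (insert v a) b
  | n + 1, false, a, b => ∀ v ∈ Finset.univ \ (a ∪ b), WinsAux win n true a (insert v b)

/-- Dominator has a winning strategy in the Maker-Breaker total domination game on `G`,
where `dFirst = true` means Dominator moves first (the D-game) and `dFirst = false` means
Staller moves first (the S-game).  Dominator wins iff the set of vertices he has claimed at
the end of the game is a total dominating set of `G`. -/
def DominatorWinsMBTD (G : SimpleGraph V) (dFirst : Bool) : Prop :=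
  WinsAux (fun a _ => IsTotalDomSet G a) (Fintype.card V) dFirst ∅ ∅

/-- Staller has a winning strategy in the Maker-Breaker total domination game on `G`,
where `dFirst = true` means Dominator moves first (the D-game) and `dFirst = false` means
Staller moves first (the S-game).  Staller wins iff she claims every vertex of the open
neighbourhood of some vertex. -/
def StallerWinsMBTD (G : SimpleGraph V) (dFirst : Bool) : Prop :=
  WinsAux (fun a _ => ∃ v : V, ∀ u : V, G.Adj u v → u ∈ a) (Fintype.card V) (!dFirst) ∅ ∅

/-- `G` is a `𝒟` graph: Dominator wins both the D-game and the S-game. -/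
def IsD (G : SimpleGraph V) : Prop :=
  DominatorWinsMBTD G true ∧ DominatorWinsMBTD G false

/-- `G` is an `𝒮` graph: Staller wins both the D-game and the S-game. -/
def IsS (G : SimpleGraph V) : Prop :=
  StallerWinsMBTD G true ∧ StallerWinsMBTD G false

/-- `G` is an `𝒩` graph: whichever player moves first wins. -/
def IsN (G : SimpleGraph V) : Prop :=
  DominatorWinsMBTD G true ∧ StallerWinsMBTD G false

end MBTD

namespace MBTD

open Function

variable {V : Type*}

def TotallyDominates (G : SimpleGraph V) (a s : Finset V) : Prop :=
  ∀ v ∈ s, ∃ u ∈ a, G.Adj u v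

lemma totallyDominates_monotone (G : SimpleGraph V) (s : Finset V) :
    Monotone fun a => TotallyDominates G a s :=
  fun _ _ hab h v hv => (h v hv).imp fun _ ⟨hu, hadj⟩ => ⟨hab hu, hadj⟩

lemma isTotalDomSet_of_forall_totallyDominates {G : SimpleGraph V} {ι : Type*}
    {P : ι → Finset V} (hcover : ∀ v, ∃ i, v ∈ P i) {a : Finset V}
    (h : ∀ i, TotallyDominates G a (P i)) : IsTotalDomSet G a := fun v =>
  (hcover v).elim fun i hi => h i v hi

variable [DecidableEq V]

/-- `WinsAux` played on the board `S` only, with a win condition on the tracked player's set. -/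
def WinsOn (w : Finset V → Prop) (S : Finset V) : ℕ → Bool → Finset V → Finset V → Prop
  | 0, _, a, _ => w a
  | n + 1, true, a, b => ∃ v ∈ S \ (a ∪ b), WinsOn w S n false (insert v a) b
  | n + 1, false, a, b => ∀ v ∈ S \ (a ∪ b), WinsOn w S n true a (insert v b)

def MakerWinsSecond (w : Finset V → Prop) (S a b : Finset V) : Prop :=
  WinsOn w S (S \ (a ∪ b)).card false a b

lemma card_sdiff_insert_add_one {S t : Finset V} {v : V} (hv : v ∈ S \ t) :
    (S \ insert v t).card + 1 = (S \ t).card := by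
  rw [Finset.sdiff_insert, Finset.card_erase_add_one hv]

lemma WinsOn.win_union_sdiff {w : Finset V → Prop} {S : Finset V} (hw : Monotone w) :
    ∀ (n : ℕ) (t : Bool) (a b : Finset V), n = (S \ (a ∪ b)).card → WinsOn w S n t a b →
      w (a ∪ S \ b) := by
  intro n
  induction n with
  | zero => exact fun _ a b _ h => hw Finset.subset_union_left h
  | succ n ih =>
    intro t a b hn h
    cases t with
    | true =>
      obtain ⟨v, hv, h⟩ := h
      have hfuel : n = (S \ (insert v a ∪ b)).card := by
        have := card_sdiff_insert_add_one hv
        rw [Finset.insert_union]; omega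
      refine hw (fun x hx => ?_) (ih false _ _ hfuel h)
      simp only [Finset.mem_union, Finset.mem_insert, Finset.mem_sdiff] at hx hv ⊢
      rcases hx with (rfl | hx) | hx <;> tauto
    | false =>
      obtain ⟨v, hv⟩ : (S \ (a ∪ b)).Nonempty := Finset.card_pos.mp (by omega)
      have hfuel : n = (S \ (a ∪ insert v b)).card := by
        have := card_sdiff_insert_add_one hv
        rw [Finset.union_insert]; omega
      refine hw (fun x hx => ?_) (ih true _ _ hfuel (h v hv))
      simp only [Finset.mem_union, Finset.mem_insert, Finset.mem_sdiff] at hx ⊢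
      tauto

lemma MakerWinsSecond.breaker_move {w : Finset V → Prop} {S A B : Finset V} {v : V}
    (h : MakerWinsSecond w S A B) (hv : v ∈ S \ (A ∪ B)) :
    MakerWinsSecond w S A (insert v B) ∨
      ∃ u ∈ S \ (A ∪ insert v B), MakerWinsSecond w S (insert u A) (insert v B) := by
  unfold MakerWinsSecond at h ⊢
  have hcard := card_sdiff_insert_add_one hv
  rw [← Finset.union_insert] at hcard
  rw [← hcard] at h
  have hreply := h v hv
  rcases hm : (S \ (A ∪ insert v B)).card with _ | m
  · rw [hm] at hreply
    exact Or.inl hreply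
  · rw [hm] at hreply
    obtain ⟨u, hu, hwin⟩ := hreply
    have hfuel : (S \ (insert u A ∪ insert v B)).card = m := by
      have := card_sdiff_insert_add_one hu
      rw [Finset.insert_union]; omega
    exact Or.inr ⟨u, hu, hfuel ▸ hwin⟩

lemma WinsAux.mono [Fintype V] {win win' : Finset V → Finset V → Prop}
    (hwin : ∀ a b, win a b → win' a b) :
    ∀ (n : ℕ) (t : Bool) (a b : Finset V), WinsAux win n t a b → WinsAux win' n t a b := by
  intro n
  induction n with
  | zero => exact fun _ => hwin
  | succ n ih =>
    rintro (_ | _) a b h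
    · exact fun v hv => ih _ _ _ (h v hv)
    · exact h.imp fun v ⟨hv, h⟩ => ⟨hv, ih _ _ _ h⟩

lemma WinsOn.of_winsAux_subtype {s : Finset V}
    {win : Finset (↑s : Set V) → Finset (↑s : Set V) → Prop} {w : Finset V → Prop}
    (hw : ∀ A B, win A B → w (A.map (Embedding.subtype _))) :
    ∀ (n : ℕ) (t : Bool) (A B : Finset (↑s : Set V)), WinsAux win n t A B →
      WinsOn w s n t (A.map (Embedding.subtype _)) (B.map (Embedding.subtype _)) := by
  intro n
  induction n with
  | zero => exact fun _ A B h => hw A B h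
  | succ n ih =>
    intro t A B h
    cases t with
    | true =>
      obtain ⟨v, hv, h⟩ := h
      refine ⟨v.1, ?_, by simpa [Finset.map_insert] using ih false _ B h⟩
      simpa using hv
    | false =>
      intro u hu
      obtain ⟨hus, hu⟩ := Finset.mem_sdiff.mp hu
      have hu' : (⟨u, hus⟩ : (↑s : Set V)) ∈ Finset.univ \ (A ∪ B) := by
        simpa [hus] using hu
      simpa [Finset.map_insert] using ih true A _ (h _ hu')

lemma makerWinsSecond_of_dominatorWinsMBTD_induce {G : SimpleGraph V} {s : Finset V}
    (h : DominatorWinsMBTD (G.induce (↑s : Set V)) false) :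
    MakerWinsSecond (TotallyDominates G · s) s ∅ ∅ := by
  have hw : ∀ A B : Finset (↑s : Set V), IsTotalDomSet (G.induce (↑s : Set V)) A →
      TotallyDominates G (A.map (Embedding.subtype _)) s := by
    intro A _ hA v hv
    obtain ⟨u, huA, hadj⟩ := hA ⟨v, hv⟩
    exact ⟨u.1, Finset.mem_map_of_mem _ huA, hadj⟩
  simpa [MakerWinsSecond] using WinsOn.of_winsAux_subtype hw _ false ∅ ∅ h

section Partition

variable {ι : Type*} (P : ι → Finset V) (w : ι → Finset V → Prop)

/-- In each part Maker follows a winning strategy from an imagined set `A ⊆ a`; his vertices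
outside these sets are extra moves, which never hurt him since the `w i` are monotone. -/
def PartwiseWinning (a b : Finset V) : Prop :=
  ∀ i, ∃ A ⊆ a ∩ P i, MakerWinsSecond (w i) (P i) A (b ∩ P i)

variable {P w}

lemma PartwiseWinning.mono {a a' b : Finset V} (h : PartwiseWinning P w a b) (haa' : a ⊆ a') :
    PartwiseWinning P w a' b := fun i =>
  (h i).imp fun _ ⟨hA, hwin⟩ => ⟨hA.trans (Finset.inter_subset_inter_right haa'), hwin⟩

lemma PartwiseWinning.insert_of_mem {a b : Finset V} {v : V} {j : ι}
    (hP : Pairwise (Disjoint on P)) (hvj : v ∈ P j) (h : PartwiseWinning P w a b)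
    (hj : ∃ A ⊆ a ∩ P j, MakerWinsSecond (w j) (P j) A (insert v (b ∩ P j))) :
    PartwiseWinning P w a (insert v b) := by
  intro i
  by_cases hij : i = j
  · subst hij
    rwa [Finset.insert_inter_of_mem hvj]
  · have hvi : v ∉ P i := Finset.disjoint_right.mp (hP hij) hvj
    rw [Finset.insert_inter_of_notMem hvi]
    exact h i

lemma PartwiseWinning.breaker_move {a b : Finset V} {v : V}
    (hP : Pairwise (Disjoint on P)) (hcover : ∀ v, ∃ i, v ∈ P i)
    (h : PartwiseWinning P w a b) (hv : v ∉ a ∪ b) :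
    PartwiseWinning P w a (insert v b) ∨
      ∃ u ∉ a ∪ insert v b, PartwiseWinning P w (insert u a) (insert v b) := by
  obtain ⟨j, hvj⟩ := hcover v
  obtain ⟨A, hA, hwin⟩ := h j
  have hvfree : v ∈ P j \ (A ∪ b ∩ P j) := by
    simp only [Finset.mem_sdiff, Finset.mem_union, Finset.mem_inter] at hv ⊢
    exact ⟨hvj, fun hmem =>
      hv (hmem.imp (fun hvA => (Finset.mem_inter.mp (hA hvA)).1) And.left)⟩
  rcases hwin.breaker_move hvfree with hwin' | ⟨u, hu, hwin'⟩
  · exact Or.inl (h.insert_of_mem hP hvj ⟨A, hA, hwin'⟩)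
  · simp only [Finset.mem_sdiff, Finset.mem_union, Finset.mem_insert, Finset.mem_inter] at hu
    have hsub : insert u A ⊆ insert u a ∩ P j := Finset.insert_subset
      (Finset.mem_inter.mpr ⟨Finset.mem_insert_self _ _, hu.1⟩)
      (hA.trans (Finset.inter_subset_inter_right (Finset.subset_insert _ _)))
    have hwin'' := (h.mono (Finset.subset_insert u a)).insert_of_mem hP hvj ⟨_, hsub, hwin'⟩
    by_cases hua : u ∈ a
    · rw [Finset.insert_eq_of_mem hua] at hwin''
      exact Or.inl hwin''
    · refine Or.inr ⟨u, ?_, hwin''⟩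
      simp only [Finset.mem_union, Finset.mem_insert]
      tauto

lemma PartwiseWinning.win_of_forall_mem {a b : Finset V} (hw : ∀ i, Monotone (w i))
    (h : PartwiseWinning P w a b) (hfull : ∀ x, x ∈ a ∪ b) (i : ι) : w i a := by
  obtain ⟨A, hA, hwin⟩ := h i
  refine hw i (fun x hx => ?_) (hwin.win_union_sdiff (hw i) _ false _ _ rfl)
  simp only [Finset.mem_union, Finset.mem_sdiff, Finset.mem_inter] at hx
  rcases hx with hx | ⟨_, hxb⟩
  · exact (Finset.mem_inter.mp (hA hx)).1
  · exact (Finset.mem_union.mp (hfull x)).resolve_right fun hb => hxb ⟨hb, ‹_›⟩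

variable [Fintype V]

lemma winsAux_of_partwiseWinning (hP : Pairwise (Disjoint on P))
    (hcover : ∀ v, ∃ i, v ∈ P i) (hw : ∀ i, Monotone (w i)) :
    ∀ n : ℕ,
      (∀ a b : Finset V, n = (Finset.univ \ (a ∪ b)).card → PartwiseWinning P w a b →
        WinsAux (fun a _ => ∀ i, w i a) n false a b) ∧
      (∀ a b : Finset V, n = (Finset.univ \ (a ∪ b)).card →
        -- Maker to move either has the reply `u` prescribed by some part, or moves freely.
        (PartwiseWinning P w a b ∨ ∃ u ∉ a ∪ b, PartwiseWinning P w (insert u a) b) →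
        WinsAux (fun a _ => ∀ i, w i a) n true a b) := by
  have hfull : ∀ a b : Finset V, 0 = (Finset.univ \ (a ∪ b)).card → ∀ x, x ∈ a ∪ b := by
    intro a b h x
    exact Finset.sdiff_eq_empty_iff_subset.mp (Finset.card_eq_zero.mp h.symm) (Finset.mem_univ x)
  intro n
  induction n with
  | zero =>
    refine ⟨fun a b hn h => h.win_of_forall_mem hw (hfull a b hn), fun a b hn h => ?_⟩
    rcases h with h | ⟨u, hu, _⟩
    · exact h.win_of_forall_mem hw (hfull a b hn)
    · exact absurd (hfull a b hn u) hu
  | succ n ih =>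
    refine ⟨fun a b hn h v hv => ?_, fun a b hn h => ?_⟩
    · have hv' : v ∉ a ∪ b := (Finset.mem_sdiff.mp hv).2
      have := card_sdiff_insert_add_one hv
      rw [← Finset.union_insert] at this
      exact ih.2 a (insert v b) (by omega) (h.breaker_move hP hcover hv')
    · obtain ⟨u, hu, h⟩ : ∃ u ∉ a ∪ b, PartwiseWinning P w (insert u a) b := by
        rcases h with h | h
        · obtain ⟨u, hu⟩ : (Finset.univ \ (a ∪ b)).Nonempty := Finset.card_pos.mp (by omega)
          exact ⟨u, (Finset.mem_sdiff.mp hu).2, h.mono (Finset.subset_insert u a)⟩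
        · exact h
      have hu' : u ∈ Finset.univ \ (a ∪ b) := Finset.mem_sdiff.mpr ⟨Finset.mem_univ u, hu⟩
      have := card_sdiff_insert_add_one hu'
      rw [← Finset.insert_union] at this
      exact ⟨u, hu', ih.1 _ b (by omega) h⟩

lemma makerWins_of_partwiseWinning_empty (hP : Pairwise (Disjoint on P))
    (hcover : ∀ v, ∃ i, v ∈ P i) (hw : ∀ i, Monotone (w i))
    (h : PartwiseWinning P w ∅ ∅) (t : Bool) :
    WinsAux (fun a _ => ∀ i, w i a) (Fintype.card V) t ∅ ∅ := by
  have hcard : Fintype.card V = (Finset.univ \ (∅ ∪ ∅ : Finset V)).card := by simp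
  cases t
  · exact (winsAux_of_partwiseWinning hP hcover hw _).1 ∅ ∅ hcard h
  · exact (winsAux_of_partwiseWinning hP hcover hw _).2 ∅ ∅ hcard (Or.inl h)

end Partition

theorem stmt1_general {V : Type*} [Fintype V] [DecidableEq V] (G : SimpleGraph V)
    (k : ℕ) (P : Fin k → Finset V)
    (hdisj : ∀ i j, i ≠ j → Disjoint (P i) (P j))
    (hcover : ∀ v : V, ∃ i, v ∈ P i)
    (hD : ∀ i, IsD (G.induce (↑(P i) : Set V))) :
    IsD G := by
  have hparts : PartwiseWinning P (fun i a => TotallyDominates G a (P i)) ∅ ∅ := fun i =>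
    ⟨∅, Finset.empty_subset _, by
      simpa using makerWinsSecond_of_dominatorWinsMBTD_induce (hD i).2⟩
  have hwins (t : Bool) : DominatorWinsMBTD G t :=
    WinsAux.mono (win := fun a _ => ∀ i, TotallyDominates G a (P i))
      (fun _ _ => isTotalDomSet_of_forall_totallyDominates hcover) _ t ∅ ∅
      (makerWins_of_partwiseWinning_empty hdisj hcover
        (fun i => totallyDominates_monotone G (P i)) hparts t)
  exact ⟨hwins true, hwins false⟩

/-- if `V(G)` is partitioned into parts each of which induces a `𝒟` graph,
then `G` is a `𝒟` graph. -/
theorem stmt1 {V : Type*} [Fintype V] [DecidableEq V] (G : SimpleGraph V)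
    (k : ℕ) (P : Fin k → Finset V)
    (hne : ∀ i, (P i).Nonempty)
    (hdisj : ∀ i j, i ≠ j → Disjoint (P i) (P j))
    (hcover : ∀ v : V, ∃ i, v ∈ P i)
    (hD : ∀ i, IsD (G.induce (↑(P i) : Set V))) :
    IsD G :=
  stmt1_general G k P hdisj hcover hD

end MBTD
end

section
/- For the Maker–Breaker total domination game played on cycles: the cycle C_3 is an N graph, the cycle C_4 is a D graph, and for every n ≥ 5 the cycle C_n is an S graph. -/
namespace MBTD

variable {V : Type*} [Fintype V] [DecidableEq V]

/-! ### Auxiliary machinery -/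

instance decIsTotalDomSet (G : SimpleGraph V) [DecidableRel G.Adj] (a : Finset V) :
    Decidable (IsTotalDomSet G a) := by unfold IsTotalDomSet; infer_instance

instance decWinsAux (win : Finset V → Finset V → Prop) [inst : ∀ a b, Decidable (win a b)] :
    ∀ (n : ℕ) (t : Bool) (a b : Finset V), Decidable (WinsAux win n t a b)
  | 0, _, a, b => inst a b
  | n + 1, true, a, b =>
      have := fun v => decWinsAux win n false (insert v a) b
      inferInstanceAs (Decidable (∃ v ∈ Finset.univ \ (a ∪ b), WinsAux win n false (insert v a) b))
  | n + 1, false, a, b =>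
      have := fun v => decWinsAux win n true a (insert v b)
      inferInstanceAs (Decidable (∀ v ∈ Finset.univ \ (a ∪ b), WinsAux win n true a (insert v b)))

lemma free_insert_left {a b : Finset V} {v : V} :
    Finset.univ \ (insert v a ∪ b) = (Finset.univ \ (a ∪ b)).erase v := by
  ext u; simp only [Finset.mem_sdiff, Finset.mem_univ, Finset.mem_union, Finset.mem_insert,
    Finset.mem_erase, true_and]; tauto

lemma free_insert_right {a b : Finset V} {v : V} :
    Finset.univ \ (a ∪ insert v b) = (Finset.univ \ (a ∪ b)).erase v := by
  ext u; simp only [Finset.mem_sdiff, Finset.mem_univ, Finset.mem_union, Finset.mem_insert,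
    Finset.mem_erase, true_and]; tauto

/-- If the winning condition already holds and is monotone (depending only on the tracked
player's set, monotonically), then the tracked player wins by playing arbitrarily. -/
lemma winsAux_of_holds (win : Finset V → Finset V → Prop)
    (hmono : ∀ a a' b b', a ⊆ a' → win a b → win a' b') :
    ∀ (n : ℕ) (t : Bool) (a b : Finset V),
      (Finset.univ \ (a ∪ b)).card = n → win a b → WinsAux win n t a b := by
  intro n
  induction n with
  | zero => intro t a b _ hw; cases t <;> exact hw
  | succ n ih =>
    intro t a b hcard hw
    cases t
    · -- opponent to move
      intro v hv
      refine ih true a (insert v b) ?_ (hmono a a b (insert v b) le_rfl hw)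
      rw [free_insert_right, Finset.card_erase_of_mem hv, hcard]; omega
    · -- tracked player to move; the free set is nonempty
      have hne : (Finset.univ \ (a ∪ b)).Nonempty := by
        rw [← Finset.card_pos, hcard]; omega
      obtain ⟨v, hv⟩ := hne
      refine ⟨v, hv, ih false (insert v a) b ?_
        (hmono a (insert v a) b b (Finset.subset_insert _ _) hw)⟩
      rw [free_insert_left, Finset.card_erase_of_mem hv, hcard]; omega

/-- The Staller winning condition is monotone. -/
lemma staller_mono (G : SimpleGraph V) :
    ∀ a a' b b' : Finset V, a ⊆ a' →
      (∃ v : V, ∀ u : V, G.Adj u v → u ∈ a) → (∃ v : V, ∀ u : V, G.Adj u v → u ∈ a') :=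
  fun _ _ _ _ hsub ⟨v, h⟩ => ⟨v, fun u hu => hsub (h u hu)⟩

section Cycle

variable {m : ℕ}

open scoped Fin.NatCast Fin.CommRing

lemma fin_natCast_ne_zero {k : ℕ} (h0 : 0 < k) (hk : k < m + 5) : ((k : ℕ) : Fin (m+5)) ≠ 0 := by
  intro h
  rw [Fin.natCast_eq_zero] at h
  exact absurd (Nat.le_of_dvd h0 h) (by omega)

lemma fin_shift_ne (x : Fin (m+5)) {k : ℕ} (h0 : 0 < k) (hk : k < m + 5) :
    x + (k : Fin (m+5)) ≠ x := by
  intro h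
  exact fin_natCast_ne_zero h0 hk (by rwa [add_eq_left] at h)

lemma fin_x_sub_ne (x : Fin (m+5)) : x - 2 ≠ x := by
  intro h
  rw [sub_eq_self] at h
  exact fin_natCast_ne_zero (by norm_num) (by omega) (k := 2) (by exact_mod_cast h)

lemma fin_x2_ne_xm2 (x : Fin (m+5)) : x + 2 ≠ x - 2 := by
  intro h
  have h4 : ((4:ℕ) : Fin (m+5)) = 0 := by
    have := sub_eq_zero.mpr h
    rw [show x + 2 - (x - 2) = 4 by ring] at this
    exact_mod_cast this
  exact fin_natCast_ne_zero (by norm_num) (by omega) h4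

/-- If Staller owns both neighbours of some vertex of the cycle, her winning condition holds. -/
lemma staller_pair_win {l : ℕ} {a : Finset (Fin (l+2))} (w : Fin (l+2))
    (h1 : w - 1 ∈ a) (h2 : w + 1 ∈ a) :
    ∃ v : Fin (l+2), ∀ u : Fin (l+2), (SimpleGraph.cycleGraph (l+2)).Adj u v → u ∈ a := by
  refine ⟨w, fun u hu => ?_⟩
  rw [SimpleGraph.cycleGraph_adj] at hu
  rcases hu with h | h
  · rw [sub_eq_iff_eq_add] at h
    have : u = w + 1 := by rw [h]; ring
    rwa [this]
  · rw [sub_eq_iff_eq_add] at h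
    have : u = w - 1 := by rw [h]; ring
    rwa [this]

/-- Staller's key double threat: if she has just claimed `x` with both `x+2` and `x-2`
free, she wins. -/
lemma staller_key (k : ℕ) (x : Fin (m+5)) (b : Finset (Fin (m+5)))
    (hxb : x ∉ b) (h1 : x + 2 ∉ b) (h2 : x - 2 ∉ b)
    (hcard : (Finset.univ \ ({x} ∪ b)).card = k + 2) :
    WinsAux (fun a _ => ∃ v : Fin (m+5), ∀ u : Fin (m+5),
        (SimpleGraph.cycleGraph (m+5)).Adj u v → u ∈ a)
      (k+2) false {x} b := by
  intro v hv
  by_cases hvx : v = x + 2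
  · -- Dominator blocked `x+2`; Staller takes `x-2`
    have hymem : x - 2 ∈ Finset.univ \ ({x} ∪ insert v b) := by
      simp only [Finset.mem_sdiff, Finset.mem_univ, Finset.mem_union, Finset.mem_insert,
        Finset.mem_singleton, true_and]
      rintro (h | h | h)
      · exact fin_x_sub_ne x h
      · exact fin_x2_ne_xm2 x (hvx ▸ h.symm)
      · exact h2 h
    refine ⟨x - 2, hymem, ?_⟩
    refine winsAux_of_holds _ (staller_mono _) k false _ _ ?_ ?_
    · rw [show (insert (x-2) {x} ∪ insert v b : Finset (Fin (m+5)))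
            = insert (x-2) (insert v ({x} ∪ b)) by
        ext u; simp only [Finset.mem_union, Finset.mem_insert, Finset.mem_singleton]; tauto]
      rw [show (Finset.univ \ insert (x-2) (insert v ({x} ∪ b)) : Finset (Fin (m+5)))
            = ((Finset.univ \ ({x} ∪ b)).erase v).erase (x-2) by
        ext u; simp only [Finset.mem_sdiff, Finset.mem_univ, Finset.mem_insert,
          Finset.mem_union, Finset.mem_erase, Finset.mem_singleton, true_and]; tauto]
      have hv' : v ∈ Finset.univ \ ({x} ∪ b) := hv
      have hy' : x - 2 ∈ (Finset.univ \ ({x} ∪ b)).erase v := by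
        simp only [Finset.mem_erase, Finset.mem_sdiff, Finset.mem_univ, Finset.mem_union,
          Finset.mem_singleton, true_and]
        refine ⟨fun h => (fin_x2_ne_xm2 x) (hvx ▸ h.symm), ?_⟩
        rintro (h | h)
        · exact fin_x_sub_ne x h
        · exact h2 h
      rw [Finset.card_erase_of_mem hy', Finset.card_erase_of_mem hv', hcard]; omega
    · -- she owns both neighbours of `x - 1`
      refine staller_pair_win (l := m+3) (x - 1) ?_ ?_
      · rw [show x - 1 - 1 = x - 2 by ring]; simp
      · rw [show x - 1 + 1 = x by ring]; simp
  · -- `x+2` is still free; Staller takes it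
    have hymem : x + 2 ∈ Finset.univ \ ({x} ∪ insert v b) := by
      simp only [Finset.mem_sdiff, Finset.mem_univ, Finset.mem_union, Finset.mem_insert,
        Finset.mem_singleton, true_and]
      rintro (h | h | h)
      · exact fin_shift_ne x (k := 2) (by norm_num) (by omega) h
      · exact hvx h.symm
      · exact h1 h
    refine ⟨x + 2, hymem, ?_⟩
    refine winsAux_of_holds _ (staller_mono _) k false _ _ ?_ ?_
    · rw [show (insert (x+2) {x} ∪ insert v b : Finset (Fin (m+5)))
            = insert (x+2) (insert v ({x} ∪ b)) by
        ext u; simp only [Finset.mem_union, Finset.mem_insert, Finset.mem_singleton]; tauto]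
      rw [show (Finset.univ \ insert (x+2) (insert v ({x} ∪ b)) : Finset (Fin (m+5)))
            = ((Finset.univ \ ({x} ∪ b)).erase v).erase (x+2) by
        ext u; simp only [Finset.mem_sdiff, Finset.mem_univ, Finset.mem_insert,
          Finset.mem_union, Finset.mem_erase, Finset.mem_singleton, true_and]; tauto]
      have hv' : v ∈ Finset.univ \ ({x} ∪ b) := hv
      have hy' : x + 2 ∈ (Finset.univ \ ({x} ∪ b)).erase v := by
        simp only [Finset.mem_erase, Finset.mem_sdiff, Finset.mem_univ, Finset.mem_union,
          Finset.mem_singleton, true_and]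
        refine ⟨fun h => hvx h.symm, ?_⟩
        rintro (h | h)
        · exact fin_shift_ne x (k := 2) (by norm_num) (by omega) h
        · exact h1 h
      rw [Finset.card_erase_of_mem hy', Finset.card_erase_of_mem hv', hcard]; omega
    · refine staller_pair_win (l := m+3) (x + 1) ?_ ?_
      · rw [show x + 1 - 1 = x by ring]; simp
      · rw [show x + 1 + 1 = x + 2 by ring]; simp

lemma cycle_isS (m : ℕ) : IsS (SimpleGraph.cycleGraph (m + 5)) := by
  constructor
  · -- D-game: Dominator moves first, Staller is the tracked player and moves second
    show WinsAux _ (Fintype.card (Fin (m+5))) false ∅ ∅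
    rw [Fintype.card_fin]
    intro d hd
    have hne1 : d + 1 ≠ d := by
      have := fin_shift_ne d (k := 1) (by norm_num) (by omega)
      simpa using this
    refine ⟨d + 1, ?_, ?_⟩
    · simp only [Finset.mem_sdiff, Finset.mem_univ, Finset.empty_union, Finset.mem_insert,
        true_and]
      simp [hne1]
    · have h3 : d + 1 + 2 ≠ d := by
        have := fin_shift_ne d (k := 3) (by norm_num) (by omega)
        rw [show d + 1 + 2 = d + ((3:ℕ) : Fin (m+5)) by push_cast; ring]
        exact this
      have hm1 : d + 1 - 2 = d - 1 := by ring
      have h1' : d - 1 ≠ d := by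
        intro h
        rw [sub_eq_self] at h
        exact fin_natCast_ne_zero (k := 1) (by norm_num) (by omega) (by exact_mod_cast h)
      rw [LawfulSingleton.insert_empty_eq]
      refine staller_key (m+1) (d+1) (insert d ∅) ?_ ?_ ?_ ?_
      · simp [hne1]
      · simp [h3]
      · rw [hm1]; simp [h1']
      · rw [Finset.card_sdiff_of_subset (Finset.subset_univ _), Finset.card_univ, Fintype.card_fin]
        rw [show ({d+1} ∪ insert d ∅ : Finset (Fin (m+5))) = insert (d+1) {d} by
          ext u; simp only [Finset.mem_union, Finset.mem_insert, Finset.mem_singleton,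
            Finset.notMem_empty]; tauto]
        rw [Finset.card_insert_of_notMem (by simp [hne1]), Finset.card_singleton]; omega
  · -- S-game: Staller moves first
    show WinsAux _ (Fintype.card (Fin (m+5))) true ∅ ∅
    rw [Fintype.card_fin]
    refine ⟨0, by simp, ?_⟩
    rw [LawfulSingleton.insert_empty_eq]
    refine staller_key (m+2) (0 : Fin (m+5)) (∅ : Finset (Fin (m+5)))
      (by simp) (by simp) (by simp) ?_
    rw [Finset.card_sdiff_of_subset (Finset.subset_univ _), Finset.card_univ, Fintype.card_fin]
    simp

end Cycle

/-- `C₃` is `𝒩`, `C₄` is `𝒟`, and `Cₙ` is `𝒮` for every `n ≥ 5`. -/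
theorem stmt3 :
    IsN (SimpleGraph.cycleGraph 3) ∧ IsD (SimpleGraph.cycleGraph 4) ∧
    ∀ n : ℕ, 5 ≤ n → IsS (SimpleGraph.cycleGraph n) := by
  refine ⟨⟨?_, ?_⟩, ⟨?_, ?_⟩, ?_⟩
  · unfold DominatorWinsMBTD; decide
  · unfold StallerWinsMBTD; decide
  · unfold DominatorWinsMBTD; decide
  · unfold DominatorWinsMBTD; decide
  · intro n hn
    obtain ⟨m, rfl⟩ : ∃ m, n = m + 5 := ⟨n - 5, by omega⟩
    exact cycle_isS m

end MBTD
end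

section
/- Let G and H be disjoint finite simple graphs and consider the Maker–Breaker total domination game on their disjoint union G ∪ H. If both G and H are D graphs, then G ∪ H is a D graph. If one of G, H is a D graph and the other is an N graph, then G ∪ H is an N graph. If both G and H are N graphs, then G ∪ H is an S graph. If at least one of G, H is an S graph, then G ∪ H is an S graph. -/
/-!
Both winning conditions are monotone in the set of the player who wants them, so claiming an extra
vertex never hurts that player. A player who wins on `G` and on `H`, and is not required to move
first in both, wins on `G ⊕g H` by answering each move of the opponent in the same component; when
he is to move in the union he moves first in the component where he may, or claims an arbitrary
vertex. Staller needs only one neighbourhood, so she wins on `G ⊕g H` as soon as she wins on one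
component, leaving the other to Dominator. In the D-game on the union of two `𝒩` graphs she answers
Dominator's first move by starting her first-player win in the other graph.
-/

namespace MBTD

variable {V : Type*} [Fintype V] [DecidableEq V]

open Finset

section Game

variable {P : Finset V → Prop} {a b : Finset V} {v : V}

lemma mem_sdiff_insert_union {x : V} :
    x ∈ univ \ (insert v a ∪ b) ↔ x ≠ v ∧ x ∈ univ \ (a ∪ b) := by
  rw [insert_union, sdiff_insert, mem_erase]

lemma mem_sdiff_union_insert {x : V} :
    x ∈ univ \ (a ∪ insert v b) ↔ x ≠ v ∧ x ∈ univ \ (a ∪ b) := by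
  rw [union_insert, sdiff_insert, mem_erase]

lemma card_sdiff_insert_union {n : ℕ} (hv : v ∈ univ \ (a ∪ b))
    (hn : #(univ \ (a ∪ b)) = n + 1) : #(univ \ (insert v a ∪ b)) = n := by
  rw [insert_union, sdiff_insert, card_erase_of_mem hv, hn, Nat.add_sub_cancel]

lemma card_sdiff_union_insert {n : ℕ} (hv : v ∈ univ \ (a ∪ b))
    (hn : #(univ \ (a ∪ b)) = n + 1) : #(univ \ (a ∪ insert v b)) = n := by
  rw [union_insert, sdiff_insert, card_erase_of_mem hv, hn, Nat.add_sub_cancel]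

theorem winsAux_of_forall (hP : ∀ s, P s) {n : ℕ} {t : Bool}
    (hn : #(univ \ (a ∪ b)) = n) : WinsAux (fun s _ => P s) n t a b := by
  induction n generalizing t a b with
  | zero => cases t <;> exact hP a
  | succ n ih =>
    cases t
    · exact fun v hv => ih (card_sdiff_union_insert hv hn)
    · obtain ⟨v, hv⟩ : (univ \ (a ∪ b)).Nonempty := card_pos.mp (by omega)
      exact ⟨v, hv, ih (card_sdiff_insert_union hv hn)⟩

theorem winsAux_insert (hP : Monotone P) {n : ℕ} {t : Bool} {w : V}
    (hn : #(univ \ (a ∪ b)) = n + 1) (hw : w ∈ univ \ (a ∪ b))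
    (h : WinsAux (fun s _ => P s) (n + 1) t a b) :
    WinsAux (fun s _ => P s) n t (insert w a) b := by
  induction n generalizing t a b w with
  | zero =>
    cases t
    · exact hP (subset_insert w a) (h w hw)
    · obtain ⟨v, hv, hwin⟩ := h
      obtain rfl : v = w := card_le_one.mp hn.le v hv w hw
      exact hwin
  | succ n ih =>
    cases t
    · intro v hv
      obtain ⟨hvw, hv⟩ := mem_sdiff_insert_union.mp hv
      exact ih (card_sdiff_union_insert hv hn) (mem_sdiff_union_insert.mpr ⟨hvw.symm, hw⟩)
        (h v hv)
    · obtain ⟨v, hv, hwin⟩ := h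
      by_cases hvw : v = w
      · subst hvw
        have hn' := card_sdiff_insert_union hv hn
        obtain ⟨u, hu⟩ : (univ \ (insert v a ∪ b)).Nonempty := card_pos.mp (by omega)
        exact ⟨u, hu, ih hn' hu hwin⟩
      · refine ⟨v, mem_sdiff_insert_union.mpr ⟨hvw, hv⟩, ?_⟩
        rw [insert_comm]
        exact ih (card_sdiff_insert_union hv hn) (mem_sdiff_insert_union.mpr ⟨Ne.symm hvw, hw⟩)
          hwin

theorem exists_winsAux_insert (hP : Monotone P) {n : ℕ} {t : Bool}
    (hn : #(univ \ (a ∪ b)) = n + 1) (h : WinsAux (fun s _ => P s) (n + 1) t a b) :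
    ∃ x ∈ univ \ (a ∪ b), WinsAux (fun s _ => P s) n false (insert x a) b := by
  cases t
  · obtain ⟨x, hx⟩ : (univ \ (a ∪ b)).Nonempty := card_pos.mp (by omega)
    exact ⟨x, hx, winsAux_insert hP hn hx h⟩
  · exact h

end Game

section DisjSum

variable {α β : Type*} [DecidableEq α] [DecidableEq β]

lemma insert_inl_disjSum (x : α) (s : Finset α) (t : Finset β) :
    insert (Sum.inl x) (s.disjSum t) = (insert x s).disjSum t := by
  ext (y | y) <;> simp

lemma insert_inr_disjSum (y : β) (s : Finset α) (t : Finset β) :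
    insert (Sum.inr y) (s.disjSum t) = s.disjSum (insert y t) := by
  ext (x | x) <;> simp

variable [Fintype α] [Fintype β] {win : Finset (α ⊕ β) → Finset (α ⊕ β) → Prop} {n : ℕ}
  {a₁ b₁ : Finset α} {a₂ b₂ : Finset β}

lemma sdiff_disjSum_union_disjSum (a₁ b₁ : Finset α) (a₂ b₂ : Finset β) :
    univ \ (a₁.disjSum a₂ ∪ b₁.disjSum b₂) =
      (univ \ (a₁ ∪ b₁)).disjSum (univ \ (a₂ ∪ b₂)) := by
  ext (x | x) <;> simp

lemma winsAux_succ_true_disjSum_inl {x : α} (hx : x ∈ univ \ (a₁ ∪ b₁))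
    (h : WinsAux win n false ((insert x a₁).disjSum a₂) (b₁.disjSum b₂)) :
    WinsAux win (n + 1) true (a₁.disjSum a₂) (b₁.disjSum b₂) :=
  ⟨.inl x, by simpa [sdiff_disjSum_union_disjSum] using hx, by rwa [insert_inl_disjSum]⟩

lemma winsAux_succ_true_disjSum_inr {y : β} (hy : y ∈ univ \ (a₂ ∪ b₂))
    (h : WinsAux win n false (a₁.disjSum (insert y a₂)) (b₁.disjSum b₂)) :
    WinsAux win (n + 1) true (a₁.disjSum a₂) (b₁.disjSum b₂) :=
  ⟨.inr y, by simpa [sdiff_disjSum_union_disjSum] using hy, by rwa [insert_inr_disjSum]⟩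

lemma winsAux_succ_false_disjSum
    (h₁ : ∀ x ∈ univ \ (a₁ ∪ b₁), WinsAux win n true (a₁.disjSum a₂) ((insert x b₁).disjSum b₂))
    (h₂ : ∀ y ∈ univ \ (a₂ ∪ b₂), WinsAux win n true (a₁.disjSum a₂) (b₁.disjSum (insert y b₂))) :
    WinsAux win (n + 1) false (a₁.disjSum a₂) (b₁.disjSum b₂) := by
  rintro (x | y) hv <;> simp only [sdiff_disjSum_union_disjSum, inl_mem_disjSum,
    inr_mem_disjSum] at hv
  · rw [insert_inl_disjSum]; exact h₁ x hv
  · rw [insert_inr_disjSum]; exact h₂ y hv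

variable {P₁ : Finset α → Prop} {P₂ : Finset β → Prop} {P : Finset (α ⊕ β) → Prop}

theorem winsAux_disjSum (hP₁ : Monotone P₁) (hP₂ : Monotone P₂)
    (hP : ∀ s₁ s₂, P₁ s₁ → P₂ s₂ → P (s₁.disjSum s₂)) {m₁ m₂ : ℕ} {t₁ t₂ : Bool}
    (ht : ¬(t₁ = true ∧ t₂ = true)) (hm₁ : #(univ \ (a₁ ∪ b₁)) = m₁)
    (hm₂ : #(univ \ (a₂ ∪ b₂)) = m₂) (h₁ : WinsAux (fun s _ => P₁ s) m₁ t₁ a₁ b₁)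
    (h₂ : WinsAux (fun s _ => P₂ s) m₂ t₂ a₂ b₂) :
    WinsAux (fun s _ => P s) (m₁ + m₂) (t₁ || t₂) (a₁.disjSum a₂) (b₁.disjSum b₂) := by
  obtain ⟨n, hn⟩ : ∃ n, m₁ + m₂ = n := ⟨_, rfl⟩
  rw [hn]
  induction n generalizing m₁ m₂ t₁ t₂ a₁ b₁ a₂ b₂ with
  | zero =>
    obtain ⟨rfl, rfl⟩ : m₁ = 0 ∧ m₂ = 0 := by omega
    have := hP _ _ (by cases t₁ <;> exact h₁) (by cases t₂ <;> exact h₂)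
    cases t₁ <;> cases t₂ <;> exact this
  | succ n ih =>
    cases t₁ <;> cases t₂
    · refine winsAux_succ_false_disjSum (fun x hx => ?_) (fun y hy => ?_)
      · obtain ⟨k, rfl⟩ : ∃ k, m₁ = k + 1 := ⟨m₁ - 1, by have := card_pos.mpr ⟨x, hx⟩; omega⟩
        exact ih (t₁ := true) (t₂ := false) (by simp) (card_sdiff_union_insert hx hm₁) hm₂
          (h₁ x hx) h₂ (by omega)
      · obtain ⟨k, rfl⟩ : ∃ k, m₂ = k + 1 := ⟨m₂ - 1, by have := card_pos.mpr ⟨y, hy⟩; omega⟩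
        exact ih (t₁ := false) (t₂ := true) (by simp) hm₁ (card_sdiff_union_insert hy hm₂)
          h₁ (h₂ y hy) (by omega)
    · rcases m₂ with _ | k
      · obtain rfl : m₁ = n + 1 := by omega
        obtain ⟨x, hx, hwin⟩ := exists_winsAux_insert hP₁ hm₁ h₁
        exact winsAux_succ_true_disjSum_inl hx (ih (t₁ := false) (t₂ := false) (by simp)
          (card_sdiff_insert_union hx hm₁) hm₂ hwin h₂ (by omega))
      · obtain ⟨y, hy, hwin⟩ := h₂
        exact winsAux_succ_true_disjSum_inr hy (ih (t₁ := false) (t₂ := false) (by simp)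
          hm₁ (card_sdiff_insert_union hy hm₂) h₁ hwin (by omega))
    · rcases m₁ with _ | k
      · obtain rfl : m₂ = n + 1 := by omega
        obtain ⟨y, hy, hwin⟩ := exists_winsAux_insert hP₂ hm₂ h₂
        exact winsAux_succ_true_disjSum_inr hy (ih (t₁ := false) (t₂ := false) (by simp)
          hm₁ (card_sdiff_insert_union hy hm₂) h₁ hwin (by omega))
      · obtain ⟨x, hx, hwin⟩ := h₁
        exact winsAux_succ_true_disjSum_inl hx (ih (t₁ := false) (t₂ := false) (by simp)
          (card_sdiff_insert_union hx hm₁) hm₂ hwin h₂ (by omega))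
    · exact absurd ⟨rfl, rfl⟩ ht

theorem winsAux_disjSum_left (hP₁ : Monotone P₁)
    (hP : ∀ s₁ (s₂ : Finset β), P₁ s₁ → P (s₁.disjSum s₂)) {m₁ m₂ : ℕ} {t : Bool}
    (hm₁ : #(univ \ (a₁ ∪ b₁)) = m₁) (hm₂ : #(univ \ (a₂ ∪ b₂)) = m₂)
    (h₁ : WinsAux (fun s _ => P₁ s) m₁ t a₁ b₁) :
    WinsAux (fun s _ => P s) (m₁ + m₂) t (a₁.disjSum a₂) (b₁.disjSum b₂) := by
  simpa only [Bool.or_false] using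
    winsAux_disjSum (P₂ := fun _ => True) hP₁ (fun _ _ _ _ => trivial)
      (fun s₁ s₂ h _ => hP s₁ s₂ h) (t₂ := false) (by simp) hm₁ hm₂ h₁
      (winsAux_of_forall (fun _ => trivial) hm₂)

theorem winsAux_disjSum_right (hP₂ : Monotone P₂)
    (hP : ∀ (s₁ : Finset α) s₂, P₂ s₂ → P (s₁.disjSum s₂)) {m₁ m₂ : ℕ} {t : Bool}
    (hm₁ : #(univ \ (a₁ ∪ b₁)) = m₁) (hm₂ : #(univ \ (a₂ ∪ b₂)) = m₂)
    (h₂ : WinsAux (fun s _ => P₂ s) m₂ t a₂ b₂) :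
    WinsAux (fun s _ => P s) (m₁ + m₂) t (a₁.disjSum a₂) (b₁.disjSum b₂) := by
  simpa only [Bool.false_or] using
    winsAux_disjSum (P₁ := fun _ => True) (fun _ _ _ _ => trivial) hP₂
      (fun s₁ s₂ _ h => hP s₁ s₂ h) (t₁ := false) (by simp) hm₁ hm₂
      (winsAux_of_forall (fun _ => trivial) hm₁) h₂

end DisjSum

section Graph

variable {W : Type*}

def ContainsNeighborhood (G : SimpleGraph W) (s : Finset W) : Prop :=
  ∃ v, ∀ u, G.Adj u v → u ∈ s

lemma monotone_isTotalDomSet (G : SimpleGraph W) : Monotone (IsTotalDomSet G) :=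
  fun _ _ hst h v => (h v).imp fun _ ⟨hu, hadj⟩ => ⟨hst hu, hadj⟩

lemma monotone_containsNeighborhood (G : SimpleGraph W) : Monotone (ContainsNeighborhood G) :=
  fun _ _ hst ⟨v, hv⟩ => ⟨v, fun u hu => hst (hv u hu)⟩

variable {α β : Type*} {G : SimpleGraph α} {H : SimpleGraph β} {s₁ : Finset α} {s₂ : Finset β}

lemma IsTotalDomSet.disjSum (h₁ : IsTotalDomSet G s₁) (h₂ : IsTotalDomSet H s₂) :
    IsTotalDomSet (G ⊕g H) (s₁.disjSum s₂) := by
  rintro (x | y)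
  · obtain ⟨u, hu, hadj⟩ := h₁ x
    exact ⟨.inl u, inl_mem_disjSum.mpr hu, hadj⟩
  · obtain ⟨u, hu, hadj⟩ := h₂ y
    exact ⟨.inr u, inr_mem_disjSum.mpr hu, hadj⟩

lemma ContainsNeighborhood.disjSum_left (h : ContainsNeighborhood G s₁) (s₂ : Finset β) :
    ContainsNeighborhood (G ⊕g H) (s₁.disjSum s₂) := by
  obtain ⟨v, hv⟩ := h
  refine ⟨.inl v, ?_⟩
  rintro (u | u) hu
  · exact inl_mem_disjSum.mpr (hv u hu)
  · simp at hu

lemma ContainsNeighborhood.disjSum_right (h : ContainsNeighborhood H s₂) (s₁ : Finset α) :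
    ContainsNeighborhood (G ⊕g H) (s₁.disjSum s₂) := by
  obtain ⟨v, hv⟩ := h
  refine ⟨.inr v, ?_⟩
  rintro (u | u) hu
  · simp at hu
  · exact inr_mem_disjSum.mpr (hv u hu)

end Graph

lemma card_sdiff_empty_union_empty : #(univ \ (∅ ∪ ∅ : Finset V)) = Fintype.card V := by simp

lemma StallerWinsMBTD.nonempty {G : SimpleGraph V} (h : StallerWinsMBTD G false) :
    Nonempty V := by
  by_contra hV
  rw [not_nonempty_iff] at hV
  rw [StallerWinsMBTD, Fintype.card_eq_zero] at h
  obtain ⟨v, -⟩ := h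
  exact hV.elim v

section Sum

variable {α β : Type*} [Fintype α] [DecidableEq α] [Fintype β] [DecidableEq β]
  {G : SimpleGraph α} {H : SimpleGraph β}

theorem DominatorWinsMBTD.sum {t₁ t₂ : Bool} (ht : ¬(t₁ = true ∧ t₂ = true))
    (h₁ : DominatorWinsMBTD G t₁) (h₂ : DominatorWinsMBTD H t₂) :
    DominatorWinsMBTD (G ⊕g H) (t₁ || t₂) := by
  have := winsAux_disjSum (monotone_isTotalDomSet G) (monotone_isTotalDomSet H)
    (fun _ _ => IsTotalDomSet.disjSum) ht card_sdiff_empty_union_empty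
    card_sdiff_empty_union_empty h₁ h₂
  rwa [empty_disjSum, map_empty, ← Fintype.card_sum] at this

theorem StallerWinsMBTD.sum_left {d : Bool} (h : StallerWinsMBTD G d) :
    StallerWinsMBTD (G ⊕g H) d := by
  have := winsAux_disjSum_left (P := ContainsNeighborhood (G ⊕g H))
    (monotone_containsNeighborhood G) (fun _ s₂ h => h.disjSum_left s₂)
    card_sdiff_empty_union_empty card_sdiff_empty_union_empty h
  rwa [empty_disjSum, map_empty, ← Fintype.card_sum] at this

theorem StallerWinsMBTD.sum_right {d : Bool} (h : StallerWinsMBTD H d) :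
    StallerWinsMBTD (G ⊕g H) d := by
  have := winsAux_disjSum_right (P := ContainsNeighborhood (G ⊕g H))
    (monotone_containsNeighborhood H) (fun s₁ _ h => h.disjSum_right s₁)
    card_sdiff_empty_union_empty card_sdiff_empty_union_empty h
  rwa [empty_disjSum, map_empty, ← Fintype.card_sum] at this

theorem StallerWinsMBTD.sum_true_of_false (h₁ : StallerWinsMBTD G false)
    (h₂ : StallerWinsMBTD H false) : StallerWinsMBTD (G ⊕g H) true := by
  have := h₁.nonempty
  obtain ⟨n, hn⟩ := Nat.exists_eq_add_one.mpr (Fintype.card_pos (α := α ⊕ β))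
  rw [StallerWinsMBTD, hn]
  rintro (x | y) -
  · obtain ⟨k, hk⟩ := Nat.exists_eq_add_one.mpr (Fintype.card_pos_iff.mpr ⟨x⟩)
    have := winsAux_disjSum_right (P := ContainsNeighborhood (G ⊕g H))
      (monotone_containsNeighborhood H) (fun s₁ _ h => h.disjSum_right s₁)
      (card_sdiff_union_insert (v := x) (by simp) (card_sdiff_empty_union_empty.trans hk))
      card_sdiff_empty_union_empty h₂
    rwa [← insert_inl_disjSum, empty_disjSum, map_empty,
      show k + Fintype.card β = n by simp only [Fintype.card_sum] at hn; omega] at this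
  · obtain ⟨k, hk⟩ := Nat.exists_eq_add_one.mpr (Fintype.card_pos_iff.mpr ⟨y⟩)
    have := winsAux_disjSum_left (P := ContainsNeighborhood (G ⊕g H))
      (monotone_containsNeighborhood G) (fun _ s₂ h => h.disjSum_left s₂)
      card_sdiff_empty_union_empty
      (card_sdiff_union_insert (v := y) (by simp) (card_sdiff_empty_union_empty.trans hk)) h₁
    rwa [← insert_inr_disjSum, empty_disjSum, map_empty,
      show Fintype.card α + k = n by simp only [Fintype.card_sum] at hn; omega] at this

end Sum

/-- the outcome of the MBTD game on a disjoint union of graphs. -/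
theorem stmt4 {α β : Type*} [Fintype α] [DecidableEq α] [Fintype β] [DecidableEq β]
    (G : SimpleGraph α) (H : SimpleGraph β) :
    (IsD G ∧ IsD H → IsD (G ⊕g H)) ∧
    ((IsD G ∧ IsN H) ∨ (IsN G ∧ IsD H) → IsN (G ⊕g H)) ∧
    (IsN G ∧ IsN H → IsS (G ⊕g H)) ∧
    (IsS G ∨ IsS H → IsS (G ⊕g H)) := by
  refine ⟨?_, ?_, ?_, ?_⟩
  · rintro ⟨⟨hG₁, hG₂⟩, -, hH₂⟩
    exact ⟨hG₁.sum (by simp) hH₂, hG₂.sum (by simp) hH₂⟩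
  · rintro (⟨⟨-, hG₂⟩, hH₁, hH₂⟩ | ⟨⟨hG₁, hG₂⟩, -, hH₂⟩)
    · exact ⟨hG₂.sum (by simp) hH₁, hH₂.sum_right⟩
    · exact ⟨hG₁.sum (by simp) hH₂, hG₂.sum_left⟩
  · rintro ⟨⟨-, hG₂⟩, -, hH₂⟩
    exact ⟨hG₂.sum_true_of_false hH₂, hG₂.sum_left⟩
  · rintro (⟨hG₁, hG₂⟩ | ⟨hH₁, hH₂⟩)
    · exact ⟨hG₁.sum_left, hG₂.sum_left⟩
    · exact ⟨hH₁.sum_right, hH₂.sum_right⟩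

end MBTD
end

section
/- (Blow-Up Lemma) Let u be a vertex of a finite simple graph G and let H be a nonempty finite simple graph disjoint from G. Let G_u[H] be the graph obtained from the disjoint union of G − u and H by joining every vertex of H by an edge to every vertex of N_G(u). If G is a D graph for the Maker–Breaker total domination game, then G_u[H] is also a D graph. -/
namespace MBTD

variable {V : Type*} [Fintype V] [DecidableEq V]

/-- The graph `G_u[H]` obtained from `G` by replacing the vertex `u` by the graph `H`:
it is the disjoint union of `G - u` and `H` together with all edges joining each vertex of `H`
to each vertex of `N_G(u)`. -/
def blowup {V W : Type*} (G : SimpleGraph V) (u : V) (H : SimpleGraph W) :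
    SimpleGraph ({x : V // x ≠ u} ⊕ W) where
  Adj x y :=
    match x, y with
    | Sum.inl a, Sum.inl b => G.Adj ↑a ↑b
    | Sum.inl a, Sum.inr _ => G.Adj ↑a u
    | Sum.inr _, Sum.inl b => G.Adj ↑b u
    | Sum.inr w, Sum.inr w' => H.Adj w w'
  symm := by
    constructor
    rintro (a | w) (b | w') h
    · exact h.symm
    · exact h
    · exact h
    · exact h.symm
  loopless := by
    constructor
    rintro (a | w) h
    · exact G.irrefl h
    · exact H.irrefl h

set_option linter.unusedSectionVars false

-- helper: card bookkeeping
lemma card_sdiff_insert' {α : Type*} [Fintype α] [DecidableEq α] {s : Finset α} {v : α}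
    (hv : v ∈ Finset.univ \ s) {n : ℕ} (h : n + 1 = (Finset.univ \ s).card) :
    n = (Finset.univ \ insert v s).card := by
  rw [Finset.sdiff_insert, Finset.card_erase_of_mem hv, ← h]; omega

-- L0: if P already holds and is monotone, the tracked player wins
lemma winsAux_of_win (P : Finset V → Prop) (hmono : ∀ v a, P a → P (insert v a)) :
    ∀ (n : ℕ) (t : Bool) (a b : Finset V), P a → n = (Finset.univ \ (a ∪ b)).card →
      WinsAux (fun s _ => P s) n t a b := by
  intro n
  induction n with
  | zero => intro t a b hP _; exact hP
  | succ n ih =>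
    intro t a b hP hcard
    cases t with
    | true =>
      have hne : (Finset.univ \ (a ∪ b)).Nonempty := by
        rw [← Finset.card_pos, ← hcard]; omega
      obtain ⟨v, hv⟩ := hne
      refine ⟨v, hv, ih false (insert v a) b (hmono v a hP) ?_⟩
      rw [Finset.insert_union]
      exact card_sdiff_insert' hv hcard
    | false =>
      intro v hv
      refine ih true a (insert v b) hP ?_
      rw [Finset.union_insert]
      exact card_sdiff_insert' hv hcard

section Blowup

variable {W : Type*} [Fintype W] [DecidableEq W] [Nonempty W]
variable (G : SimpleGraph V) (u : V) (H : SimpleGraph W)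

lemma tds_transfer (a : Finset V) (a' : Finset ({x : V // x ≠ u} ⊕ W))
    (hP : IsTotalDomSet G a)
    (h6 : ∀ (x : V) (hx : x ≠ u), x ∈ a → Sum.inl ⟨x, hx⟩ ∈ a')
    (h7 : u ∈ a → ∃ w : W, Sum.inr w ∈ a') :
    IsTotalDomSet (blowup G u H) a' := by
  rintro (⟨x, hx⟩ | w)
  · obtain ⟨y, hy, hadj⟩ := hP x
    by_cases hyu : y = u
    · subst hyu
      obtain ⟨w, hw⟩ := h7 hy
      exact ⟨Sum.inr w, hw, hadj.symm⟩
    · exact ⟨Sum.inl ⟨y, hyu⟩, h6 y hyu hy, hadj⟩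
  · obtain ⟨y, hy, hadj⟩ := hP u
    have hyu : y ≠ u := fun h => G.irrefl (v := u) (h ▸ hadj)
    exact ⟨Sum.inl ⟨y, hyu⟩, h6 y hyu hy, hadj⟩

lemma main_lemma :
    ∀ (n' : ℕ) (t : Bool) (n : ℕ) (a b : Finset V)
      (a' b' : Finset ({x : V // x ≠ u} ⊕ W)),
      WinsAux (fun s _ => IsTotalDomSet G s) n t a b →
      n = (Finset.univ \ (a ∪ b)).card →
      n' = (Finset.univ \ (a' ∪ b')).card →
      (∀ (x : V) (hx : x ≠ u), Sum.inl ⟨x, hx⟩ ∈ a' ∪ b' → x ∈ a ∪ b) →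
      (u ∉ a ∪ b → ∀ w : W, Sum.inr w ∉ a' ∪ b') →
      (∀ (x : V) (hx : x ≠ u), x ∈ a → Sum.inl ⟨x, hx⟩ ∈ a') →
      (u ∈ a → ∃ w : W, Sum.inr w ∈ a') →
      WinsAux (fun s _ => IsTotalDomSet (blowup G u H) s) n' t a' b' := by
  intro n'
  induction n' with
  | zero =>
    intro t n a b a' b' h1 h2 h3 h4 h5 h6 h7
    -- the real game is over; show that the imagined game is over too
    have hempty : (Finset.univ \ (a' ∪ b')) = ∅ :=
      (Finset.card_eq_zero.mp h3.symm)
    have hn : n = 0 := by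
      by_contra hne
      have hpos : (Finset.univ \ (a ∪ b)).Nonempty := by
        rw [← Finset.card_pos, ← h2]; omega
      obtain ⟨x, hx⟩ := hpos
      have hx' : x ∉ a ∪ b := (Finset.mem_sdiff.mp hx).2
      by_cases hxu : x = u
      · have hu' : u ∉ a ∪ b := hxu ▸ hx'
        have := h5 hu' (Classical.arbitrary W)
        have hmem : (Sum.inr (Classical.arbitrary W) :
            ({x : V // x ≠ u} ⊕ W)) ∈ Finset.univ \ (a' ∪ b') :=
          Finset.mem_sdiff.mpr ⟨Finset.mem_univ _, this⟩
        rw [hempty] at hmem; exact absurd hmem (Finset.notMem_empty _)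
      · have : (Sum.inl ⟨x, hxu⟩ : ({x : V // x ≠ u} ⊕ W)) ∈
            Finset.univ \ (a' ∪ b') :=
          Finset.mem_sdiff.mpr ⟨Finset.mem_univ _, fun h => hx' (h4 x hxu h)⟩
        rw [hempty] at this; exact absurd this (Finset.notMem_empty _)
    subst hn
    exact tds_transfer G u H a a' h1 h6 h7
  | succ n' ih =>
    intro t n a b a' b' h1 h2 h3 h4 h5 h6 h7
    -- if the imagined game is already over, Dominator has already won
    rcases n with _ | m
    · exact winsAux_of_win _ (fun v s hs x => (hs x).imp
        (fun y hy => ⟨Finset.mem_insert_of_mem hy.1, hy.2⟩))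
        (n' + 1) t a' b' (tds_transfer G u H a a' h1 h6 h7) h3
    cases t with
    | true =>
      obtain ⟨v, hvfree, hW⟩ := h1
      have hv' : v ∉ a ∪ b := (Finset.mem_sdiff.mp hvfree).2
      by_cases hvu : v = u
      · have hufree : u ∈ Finset.univ \ (a ∪ b) := hvu ▸ hvfree
        have hu' : u ∉ a ∪ b := hvu ▸ hv'
        have hWu : WinsAux (fun s _ => IsTotalDomSet G s) m false (insert u a) b :=
          hvu ▸ hW
        set w₀ := Classical.arbitrary W with hw₀
        have hfree : (Sum.inr w₀ : ({x : V // x ≠ u} ⊕ W)) ∉ a' ∪ b' := h5 hu' w₀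
        refine ⟨Sum.inr w₀, Finset.mem_sdiff.mpr ⟨Finset.mem_univ _, hfree⟩, ?_⟩
        refine ih false m (insert u a) b (insert (Sum.inr w₀) a') b' hWu ?_ ?_ ?_ ?_ ?_ ?_
        · rw [Finset.insert_union]; exact card_sdiff_insert' hufree h2
        · rw [Finset.insert_union]
          exact card_sdiff_insert' (Finset.mem_sdiff.mpr ⟨Finset.mem_univ _, hfree⟩) h3
        · intro x hx hmem
          rcases Finset.mem_union.mp hmem with hmem | hmem
          · rcases Finset.mem_insert.mp hmem with hmem | hmem
            · exact absurd hmem (by simp)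
            · have := h4 x hx (Finset.mem_union_left _ hmem)
              rw [Finset.insert_union]; exact Finset.mem_insert_of_mem this
          · have := h4 x hx (Finset.mem_union_right _ hmem)
            rw [Finset.insert_union]; exact Finset.mem_insert_of_mem this
        · intro hu; exact absurd (Finset.mem_union_left _ (Finset.mem_insert_self u a)) hu
        · intro x hx hmem
          have : x ∈ a := by
            rcases Finset.mem_insert.mp hmem with h | h
            · exact absurd h hx
            · exact h
          exact Finset.mem_insert_of_mem (h6 x hx this)
        · intro _; exact ⟨w₀, Finset.mem_insert_self _ _⟩
      · have hfree : (Sum.inl ⟨v, hvu⟩ : ({x : V // x ≠ u} ⊕ W)) ∉ a' ∪ b' :=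
          fun h => hv' (h4 v hvu h)
        refine ⟨Sum.inl ⟨v, hvu⟩, Finset.mem_sdiff.mpr ⟨Finset.mem_univ _, hfree⟩, ?_⟩
        refine ih false m (insert v a) b (insert (Sum.inl ⟨v, hvu⟩) a') b' hW ?_ ?_ ?_ ?_ ?_ ?_
        · rw [Finset.insert_union]; exact card_sdiff_insert' hvfree h2
        · rw [Finset.insert_union]
          exact card_sdiff_insert' (Finset.mem_sdiff.mpr ⟨Finset.mem_univ _, hfree⟩) h3
        · intro x hx hmem
          rw [Finset.insert_union]
          rcases Finset.mem_union.mp hmem with hmem | hmem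
          · rcases Finset.mem_insert.mp hmem with hmem | hmem
            · have : x = v := congrArg Subtype.val (Sum.inl.inj hmem)
              subst this; exact Finset.mem_insert_self _ _
            · exact Finset.mem_insert_of_mem (h4 x hx (Finset.mem_union_left _ hmem))
          · exact Finset.mem_insert_of_mem (h4 x hx (Finset.mem_union_right _ hmem))
        · intro hu w hmem
          have hu' : u ∉ a ∪ b := by
            intro h; apply hu; rw [Finset.insert_union]; exact Finset.mem_insert_of_mem h
          rcases Finset.mem_union.mp hmem with hmem | hmem
          · rcases Finset.mem_insert.mp hmem with hmem | hmem
            · exact nomatch hmem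
            · exact h5 hu' w (Finset.mem_union_left _ hmem)
          · exact h5 hu' w (Finset.mem_union_right _ hmem)
        · intro x hx hmem
          rcases Finset.mem_insert.mp hmem with h | h
          · subst h
            have : (⟨x, hx⟩ : {y : V // y ≠ u}) = ⟨x, hvu⟩ := rfl
            rw [this]; exact Finset.mem_insert_self _ _
          · exact Finset.mem_insert_of_mem (h6 x hx h)
        · intro hu
          have : u ∈ a := by
            rcases Finset.mem_insert.mp hu with h | h
            · exact absurd h.symm hvu
            · exact h
          obtain ⟨w, hw⟩ := h7 this
          exact ⟨w, Finset.mem_insert_of_mem hw⟩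
    | false =>
      intro v' hv'free
      have hv'' : v' ∉ a' ∪ b' := (Finset.mem_sdiff.mp hv'free).2
      have h3' : n' = (Finset.univ \ (a' ∪ insert v' b')).card := by
        rw [Finset.union_insert]; exact card_sdiff_insert' hv'free h3
      -- helper facts
      have hfree_im : (Finset.univ \ (a ∪ b)).Nonempty := by
        rw [← Finset.card_pos, ← h2]; omega
      rcases v' with ⟨x, hxu⟩ | w
      · by_cases hx : x ∈ a ∪ b
        · -- wasted move: imagine a phantom Staller move y
          obtain ⟨y, hy⟩ := hfree_im
          have h1' := h1 y hy
          refine ih true m a (insert y b) a' (insert (Sum.inl ⟨x, hxu⟩) b') h1' ?_ h3' ?_ ?_ h6 h7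
          · rw [Finset.union_insert]; exact card_sdiff_insert' hy h2
          · intro z hz hmem
            rw [Finset.union_insert]
            rcases Finset.mem_union.mp hmem with hmem | hmem
            · exact Finset.mem_insert_of_mem (h4 z hz (Finset.mem_union_left _ hmem))
            · rcases Finset.mem_insert.mp hmem with hmem | hmem
              · have : z = x := congrArg Subtype.val (Sum.inl.inj hmem)
                subst this; exact Finset.mem_insert_of_mem hx
              · exact Finset.mem_insert_of_mem (h4 z hz (Finset.mem_union_right _ hmem))
          · intro hu w hmem
            have hu' : u ∉ a ∪ b := by
              intro h; apply hu; rw [Finset.union_insert]; exact Finset.mem_insert_of_mem h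
            rcases Finset.mem_union.mp hmem with hmem | hmem
            · exact h5 hu' w (Finset.mem_union_left _ hmem)
            · rcases Finset.mem_insert.mp hmem with hmem | hmem
              · exact nomatch hmem
              · exact h5 hu' w (Finset.mem_union_right _ hmem)
        · -- meaningful move: Staller claims x in the imagined game
          have hxfree : x ∈ Finset.univ \ (a ∪ b) :=
            Finset.mem_sdiff.mpr ⟨Finset.mem_univ _, hx⟩
          have h1' := h1 x hxfree
          refine ih true m a (insert x b) a' (insert (Sum.inl ⟨x, hxu⟩) b') h1' ?_ h3' ?_ ?_ h6 h7
          · rw [Finset.union_insert]; exact card_sdiff_insert' hxfree h2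
          · intro z hz hmem
            rw [Finset.union_insert]
            rcases Finset.mem_union.mp hmem with hmem | hmem
            · exact Finset.mem_insert_of_mem (h4 z hz (Finset.mem_union_left _ hmem))
            · rcases Finset.mem_insert.mp hmem with hmem | hmem
              · have : z = x := congrArg Subtype.val (Sum.inl.inj hmem)
                subst this; exact Finset.mem_insert_self _ _
              · exact Finset.mem_insert_of_mem (h4 z hz (Finset.mem_union_right _ hmem))
          · intro hu w hmem
            have hu' : u ∉ a ∪ b := by
              intro h; apply hu; rw [Finset.union_insert]; exact Finset.mem_insert_of_mem h
            rcases Finset.mem_union.mp hmem with hmem | hmem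
            · exact h5 hu' w (Finset.mem_union_left _ hmem)
            · rcases Finset.mem_insert.mp hmem with hmem | hmem
              · exact nomatch hmem
              · exact h5 hu' w (Finset.mem_union_right _ hmem)
      · by_cases hu : u ∈ a ∪ b
        · -- wasted move: phantom Staller move y
          obtain ⟨y, hy⟩ := hfree_im
          have h1' := h1 y hy
          refine ih true m a (insert y b) a' (insert (Sum.inr w) b') h1' ?_ h3' ?_ ?_ h6 h7
          · rw [Finset.union_insert]; exact card_sdiff_insert' hy h2
          · intro z hz hmem
            rw [Finset.union_insert]
            rcases Finset.mem_union.mp hmem with hmem | hmem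
            · exact Finset.mem_insert_of_mem (h4 z hz (Finset.mem_union_left _ hmem))
            · rcases Finset.mem_insert.mp hmem with hmem | hmem
              · exact nomatch hmem
              · exact Finset.mem_insert_of_mem (h4 z hz (Finset.mem_union_right _ hmem))
          · intro hu' _ _
            refine absurd ?_ hu'
            rcases Finset.mem_union.mp hu with h | h
            · exact Finset.mem_union_left _ h
            · exact Finset.mem_union_right _ (Finset.mem_insert_of_mem h)
        · -- meaningful move: Staller claims u in the imagined game
          have hufree : u ∈ Finset.univ \ (a ∪ b) :=
            Finset.mem_sdiff.mpr ⟨Finset.mem_univ _, hu⟩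
          have h1' := h1 u hufree
          refine ih true m a (insert u b) a' (insert (Sum.inr w) b') h1' ?_ h3' ?_ ?_ h6 h7
          · rw [Finset.union_insert]; exact card_sdiff_insert' hufree h2
          · intro z hz hmem
            rw [Finset.union_insert]
            rcases Finset.mem_union.mp hmem with hmem | hmem
            · exact Finset.mem_insert_of_mem (h4 z hz (Finset.mem_union_left _ hmem))
            · rcases Finset.mem_insert.mp hmem with hmem | hmem
              · exact nomatch hmem
              · exact Finset.mem_insert_of_mem (h4 z hz (Finset.mem_union_right _ hmem))
          · intro hu' _ _
            exact absurd (Finset.mem_union_right _ (Finset.mem_insert_self _ _)) hu'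

end Blowup

/-- Blow-Up Lemma: if `G` is `𝒟` and `H` is nonempty, then `G_u[H]` is `𝒟`. -/
theorem stmt5 {V W : Type*} [Fintype V] [DecidableEq V] [Fintype W] [DecidableEq W]
    [Nonempty W] (G : SimpleGraph V) (u : V) (H : SimpleGraph W)
    (hG : IsD G) : IsD (blowup G u H) := by
  have key : ∀ t : Bool, DominatorWinsMBTD G t → DominatorWinsMBTD (blowup G u H) t := by
    intro t h1
    exact main_lemma G u H (Fintype.card ({x : V // x ≠ u} ⊕ W)) t (Fintype.card V)
      ∅ ∅ ∅ ∅ h1 (by simp) (by simp) (by simp) (by simp) (by simp) (by simp)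
  exact ⟨key true hG.1, key false hG.2⟩

end MBTD
end

section
/- Let G be a finite simple graph that is a D graph for the Maker–Breaker total domination game, and let H be a nonempty finite simple graph. Then the lexicographic product G[H] is a D graph. -/
namespace MBTD

variable {V : Type*} [Fintype V] [DecidableEq V]

/-- The lexicographic product `G[H]`: `(g, h)` and `(g', h')` are adjacent iff
`gg' ∈ E(G)`, or `g = g'` and `hh' ∈ E(H)`. -/
def lexProd {α β : Type*} (G : SimpleGraph α) (H : SimpleGraph β) :
    SimpleGraph (α × β) where
  Adj x y := G.Adj x.1 y.1 ∨ (x.1 = y.1 ∧ H.Adj x.2 y.2)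
  symm := by
    constructor
    rintro ⟨g, h⟩ ⟨g', h'⟩ (hadj | ⟨rfl, hadj⟩)
    · exact Or.inl hadj.symm
    · exact Or.inr ⟨rfl, hadj.symm⟩
  loopless := by
    constructor
    rintro ⟨g, h⟩ (hadj | ⟨-, hadj⟩)
    · exact G.irrefl hadj
    · exact H.irrefl hadj

lemma compl_insert_left (a b : Finset V) (v : V) :
    Finset.univ \ (insert v a ∪ b) = (Finset.univ \ (a ∪ b)).erase v := by
  ext x
  simp only [Finset.mem_sdiff, Finset.mem_univ, Finset.mem_union, Finset.mem_insert,
    Finset.mem_erase, true_and]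
  tauto

lemma compl_insert_right (a b : Finset V) (v : V) :
    Finset.univ \ (a ∪ insert v b) = (Finset.univ \ (a ∪ b)).erase v := by
  ext x
  simp only [Finset.mem_sdiff, Finset.mem_univ, Finset.mem_union, Finset.mem_insert,
    Finset.mem_erase, true_and]
  tauto

lemma doneLemma {α β : Type*} [Fintype α] [DecidableEq α] [Fintype β] [DecidableEq β]
    (G : SimpleGraph α) (H : SimpleGraph β) (A : Finset α)
    (hdom : IsTotalDomSet G A) :
    ∀ (n : ℕ) (t : Bool) (A' B' : Finset (α × β)),
      (∀ u ∈ A, ∃ h, (u, h) ∈ A') →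
      n = (Finset.univ \ (A' ∪ B')).card →
      WinsAux (fun a _ => IsTotalDomSet (lexProd G H) a) n t A' B' := by
  intro n
  induction n with
  | zero =>
    intro t A' B' hcopy _
    rintro ⟨g, h⟩
    obtain ⟨u, hu, hadj⟩ := hdom g
    obtain ⟨h', hh'⟩ := hcopy u hu
    exact ⟨(u, h'), hh', Or.inl hadj⟩
  | succ n ih =>
    intro t A' B' hcopy hn
    cases t with
    | true =>
      have hne : (Finset.univ \ (A' ∪ B')).Nonempty := by
        rw [← Finset.card_pos, ← hn]; omega
      obtain ⟨v, hv⟩ := hne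
      refine ⟨v, hv, ih false (insert v A') B' (fun u hu => ?_) ?_⟩
      · obtain ⟨h', hh'⟩ := hcopy u hu
        exact ⟨h', Finset.mem_insert_of_mem hh'⟩
      · rw [compl_insert_left, Finset.card_erase_of_mem hv]; omega
    | false =>
      intro v hv
      refine ih true A' (insert v B') hcopy ?_
      rw [compl_insert_right, Finset.card_erase_of_mem hv]; omega

lemma mainLemma {α β : Type*} [Fintype α] [DecidableEq α] [Fintype β] [DecidableEq β]
    [Nonempty β] (G : SimpleGraph α) (H : SimpleGraph β) :
    ∀ (n : ℕ) (t s : Bool) (A B : Finset α) (A' B' : Finset (α × β)),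
      WinsAux (fun a _ => IsTotalDomSet G a) ((Finset.univ \ (A ∪ B)).card) s A B →
      (∀ u ∈ A, ∃ h, (u, h) ∈ A') →
      (∀ x ∈ A' ∪ B', x.1 ∈ A ∪ B) →
      (t = false → s = false) →
      n = (Finset.univ \ (A' ∪ B')).card →
      WinsAux (fun a _ => IsTotalDomSet (lexProd G H) a) n t A' B' := by
  intro n
  induction n with
  | zero =>
    intro t s A B A' B' Hw hcopy hcols _ hn
    -- every vertex of the product is claimed, hence every column is claimed
    have hABuniv : ∀ g : α, g ∈ A ∪ B := by
      intro g
      have h0 : β := Classical.arbitrary β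
      have : (g, h0) ∈ A' ∪ B' := by
        by_contra hc
        have : (g, h0) ∈ Finset.univ \ (A' ∪ B') := by simp [hc]
        have := Finset.card_pos.mpr ⟨_, this⟩
        omega
      exact hcols _ this
    have hcard0 : (Finset.univ \ (A ∪ B)).card = 0 := by
      rw [Finset.card_eq_zero]
      ext g; simp [hABuniv g]
    rw [hcard0] at Hw
    have hdom : IsTotalDomSet G A := by cases s <;> exact Hw
    rintro ⟨g, h⟩
    obtain ⟨u, hu, hadj⟩ := hdom g
    obtain ⟨h', hh'⟩ := hcopy u hu
    exact ⟨(u, h'), hh', Or.inl hadj⟩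
  | succ n ih =>
    intro t s A B A' B' Hw hcopy hcols hts hn
    cases t with
    | false =>
      have hs : s = false := hts rfl
      subst hs
      rintro ⟨g, h⟩ hgh
      by_cases hg : g ∈ A ∪ B
      · refine ih true false A B A' (insert (g, h) B') Hw hcopy ?_ (by simp) ?_
        · intro x hx
          rcases Finset.mem_union.mp hx with hx | hx
          · exact hcols x (Finset.mem_union_left _ hx)
          · rcases Finset.mem_insert.mp hx with rfl | hx
            · exact hg
            · exact hcols x (Finset.mem_union_right _ hx)
        · rw [compl_insert_right, Finset.card_erase_of_mem hgh]; omega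
      · have hg' : g ∈ Finset.univ \ (A ∪ B) := by simp [hg]
        obtain ⟨m, hm⟩ : ∃ m, (Finset.univ \ (A ∪ B)).card = m + 1 :=
          Nat.exists_eq_succ_of_ne_zero (Finset.card_ne_zero_of_mem hg')
        rw [hm] at Hw
        have Hw2 := Hw g hg'
        refine ih true true A (insert g B) A' (insert (g, h) B') ?_ hcopy ?_ (by simp) ?_
        · have hc : (Finset.univ \ (A ∪ insert g B)).card = m := by
            rw [compl_insert_right, Finset.card_erase_of_mem hg', hm]; omega
          rw [hc]; exact Hw2
        · intro x hx
          rcases Finset.mem_union.mp hx with hx | hx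
          · have := hcols x (Finset.mem_union_left _ hx)
            rcases Finset.mem_union.mp this with h1 | h1
            · exact Finset.mem_union_left _ h1
            · exact Finset.mem_union_right _ (Finset.mem_insert_of_mem h1)
          · rcases Finset.mem_insert.mp hx with rfl | hx
            · exact Finset.mem_union_right _ (Finset.mem_insert_self _ _)
            · have := hcols x (Finset.mem_union_right _ hx)
              rcases Finset.mem_union.mp this with h1 | h1
              · exact Finset.mem_union_left _ h1
              · exact Finset.mem_union_right _ (Finset.mem_insert_of_mem h1)
        · rw [compl_insert_right, Finset.card_erase_of_mem hgh]; omega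
    | true =>
      have h₀ : β := Classical.arbitrary β
      rcases Nat.eq_zero_or_pos (Finset.univ \ (A ∪ B)).card with hm0 | hmpos
      · rw [hm0] at Hw
        have hdom : IsTotalDomSet G A := by cases s <;> exact Hw
        exact doneLemma G H A hdom (n + 1) true A' B' hcopy hn
      · obtain ⟨m, hm⟩ : ∃ m, (Finset.univ \ (A ∪ B)).card = m + 1 := ⟨(Finset.univ \ (A ∪ B)).card - 1, by omega⟩
        cases s with
        | true =>
          rw [hm] at Hw
          obtain ⟨v, hv, Hw'⟩ := Hw
          have hvAB : v ∉ A ∪ B := (Finset.mem_sdiff.mp hv).2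
          have hfree : (v, h₀) ∈ Finset.univ \ (A' ∪ B') := by
            simp only [Finset.mem_sdiff, Finset.mem_univ, true_and]
            intro hmem
            exact hvAB (hcols _ hmem)
          refine ⟨(v, h₀), hfree,
            ih false false (insert v A) B (insert (v, h₀) A') B' ?_ ?_ ?_ (fun _ => rfl) ?_⟩
          · have hc : (Finset.univ \ (insert v A ∪ B)).card = m := by
              rw [compl_insert_left, Finset.card_erase_of_mem hv, hm]; omega
            rw [hc]; exact Hw'
          · intro u hu
            rcases Finset.mem_insert.mp hu with rfl | hu
            · exact ⟨h₀, Finset.mem_insert_self _ _⟩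
            · obtain ⟨h', hh'⟩ := hcopy u hu
              exact ⟨h', Finset.mem_insert_of_mem hh'⟩
          · intro x hx
            rcases Finset.mem_union.mp hx with hx | hx
            · rcases Finset.mem_insert.mp hx with rfl | hx
              · exact Finset.mem_union_left _ (Finset.mem_insert_self _ _)
              · have := hcols x (Finset.mem_union_left _ hx)
                rcases Finset.mem_union.mp this with h1 | h1
                · exact Finset.mem_union_left _ (Finset.mem_insert_of_mem h1)
                · exact Finset.mem_union_right _ h1
            · have := hcols x (Finset.mem_union_right _ hx)
              rcases Finset.mem_union.mp this with h1 | h1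
              · exact Finset.mem_union_left _ (Finset.mem_insert_of_mem h1)
              · exact Finset.mem_union_right _ h1
          · rw [compl_insert_left, Finset.card_erase_of_mem hfree]; omega
        | false =>
          have hne : (Finset.univ \ (A' ∪ B')).Nonempty := by
            rw [← Finset.card_pos, ← hn]; omega
          obtain ⟨⟨g, h⟩, hgh⟩ := hne
          by_cases hg : g ∈ A ∪ B
          · -- wasted move: claim (g,h), simulation untouched
            refine ⟨(g, h), hgh,
              ih false false A B (insert (g, h) A') B' Hw ?_ ?_ (fun _ => rfl) ?_⟩
            · intro u hu
              obtain ⟨h', hh'⟩ := hcopy u hu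
              exact ⟨h', Finset.mem_insert_of_mem hh'⟩
            · intro x hx
              rcases Finset.mem_union.mp hx with hx | hx
              · rcases Finset.mem_insert.mp hx with rfl | hx
                · exact hg
                · exact hcols x (Finset.mem_union_left _ hx)
              · exact hcols x (Finset.mem_union_right _ hx)
            · rw [compl_insert_left, Finset.card_erase_of_mem hgh]; omega
          · have hg' : g ∈ Finset.univ \ (A ∪ B) := by simp [hg]
            rw [hm] at Hw
            have Hw2 := Hw g hg'
            rcases Nat.eq_zero_or_pos m with rfl | hm0
            · have hdom : IsTotalDomSet G A := Hw2
              exact doneLemma G H A hdom (n + 1) true A' B' hcopy hn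
            · obtain ⟨m', rfl⟩ : ∃ m', m = m' + 1 := ⟨m - 1, by omega⟩
              obtain ⟨w, hw, Hw3⟩ := Hw2
              have hwAgB : w ∉ A ∪ insert g B := (Finset.mem_sdiff.mp hw).2
              have hwAB : w ∉ A ∪ B := by
                intro hc
                apply hwAgB
                rcases Finset.mem_union.mp hc with h1 | h1
                · exact Finset.mem_union_left _ h1
                · exact Finset.mem_union_right _ (Finset.mem_insert_of_mem h1)
              have hfree : (w, h₀) ∈ Finset.univ \ (A' ∪ B') := by
                simp only [Finset.mem_sdiff, Finset.mem_univ, true_and]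
                intro hmem
                exact hwAB (hcols _ hmem)
              refine ⟨(w, h₀), hfree,
                ih false false (insert w A) (insert g B) (insert (w, h₀) A') B'
                  ?_ ?_ ?_ (fun _ => rfl) ?_⟩
              · have h1 : (Finset.univ \ (A ∪ insert g B)).card = m' + 1 := by
                  rw [compl_insert_right, Finset.card_erase_of_mem hg', hm]; omega
                have hc : (Finset.univ \ (insert w A ∪ insert g B)).card = m' := by
                  rw [compl_insert_left, Finset.card_erase_of_mem hw, h1]; omega
                rw [hc]; exact Hw3
              · intro u hu
                rcases Finset.mem_insert.mp hu with rfl | hu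
                · exact ⟨h₀, Finset.mem_insert_self _ _⟩
                · obtain ⟨h', hh'⟩ := hcopy u hu
                  exact ⟨h', Finset.mem_insert_of_mem hh'⟩
              · intro x hx
                rcases Finset.mem_union.mp hx with hx | hx
                · rcases Finset.mem_insert.mp hx with rfl | hx
                  · exact Finset.mem_union_left _ (Finset.mem_insert_self _ _)
                  · have := hcols x (Finset.mem_union_left _ hx)
                    rcases Finset.mem_union.mp this with h1 | h1
                    · exact Finset.mem_union_left _ (Finset.mem_insert_of_mem h1)
                    · exact Finset.mem_union_right _ (Finset.mem_insert_of_mem h1)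
                · have := hcols x (Finset.mem_union_right _ hx)
                  rcases Finset.mem_union.mp this with h1 | h1
                  · exact Finset.mem_union_left _ (Finset.mem_insert_of_mem h1)
                  · exact Finset.mem_union_right _ (Finset.mem_insert_of_mem h1)
              · rw [compl_insert_left, Finset.card_erase_of_mem hfree]; omega


/-- if `G` is a `𝒟` graph and `H` is nonempty, then the lexicographic product
`G[H]` is a `𝒟` graph. -/
theorem stmt6 {α β : Type*} [Fintype α] [DecidableEq α] [Fintype β] [DecidableEq β]
    [Nonempty β] (G : SimpleGraph α) (H : SimpleGraph β)
    (hG : IsD G) : IsD (lexProd G H) := by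
  obtain ⟨h1, h2⟩ := hG
  have hcard : Fintype.card (α × β)
      = (Finset.univ \ ((∅ : Finset (α × β)) ∪ ∅)).card := by simp
  constructor
  · show WinsAux (fun a _ => IsTotalDomSet (lexProd G H) a) (Fintype.card (α × β)) true ∅ ∅
    rw [hcard]
    exact mainLemma G H _ true true ∅ ∅ ∅ ∅ (by simpa [DominatorWinsMBTD] using h1) (by simp) (by simp)
      (fun h => h) rfl
  · show WinsAux (fun a _ => IsTotalDomSet (lexProd G H) a) (Fintype.card (α × β)) false ∅ ∅
    rw [hcard]
    exact mainLemma G H _ false false ∅ ∅ ∅ ∅ (by simpa [DominatorWinsMBTD] using h2) (by simp) (by simp)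
      (fun _ => rfl) rfl

end MBTD
end

section
/- Let G be a finite simple graph that does not contain two disjoint total dominating sets (equivalently, with total domatic number tdom(G) ≤ 1). Then Staller has a winning strategy in the S-game of the Maker–Breaker total domination game on G. -/
/-!
Strategy stealing. Dominator's goal, that Staller claims no whole open neighbourhood, survives
moving a vertex from Staller to Dominator, so an extra move never hurts him: a winning strategy
for the S-game yields one for the D-game. If Dominator won the S-game, Staller, moving first,
could follow his D-game strategy while he follows his S-game strategy. On the full board both
claimed sets then meet every open neighbourhood: they would be disjoint total dominating sets.
-/

namespace MBTD

variable {V : Type*} [Fintype V] [DecidableEq V]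

lemma card_sdiff_insert_of_card_sdiff {s : Finset V} {v : V} {n : ℕ} (hv : v ∉ s)
    (hs : (Finset.univ \ s).card = n + 1) : (Finset.univ \ insert v s).card = n := by
  rw [Finset.sdiff_insert, Finset.card_erase_of_mem (by simpa using hv), hs, Nat.add_sub_cancel]

lemma card_sdiff_union_eq_zero_iff {a b : Finset V} :
    (Finset.univ \ (a ∪ b)).card = 0 ↔ a ∪ b = Finset.univ := by
  rw [Finset.card_eq_zero, Finset.sdiff_eq_empty_iff_subset, Finset.univ_subset_iff]

theorem winsAux_swap_iff_not (win : Finset V → Finset V → Prop) :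
    ∀ (n : ℕ) (t : Bool) (a b : Finset V),
      WinsAux (fun b a => ¬ win a b) n (!t) b a ↔ ¬ WinsAux win n t a b
  | 0, _, _, _ => Iff.rfl
  | n + 1, true, a, b => by
    simp only [WinsAux, Bool.not_true, Finset.union_comm b a, not_exists, not_and,
      ← winsAux_swap_iff_not win n false, Bool.not_false]
  | n + 1, false, a, b => by
    simp only [WinsAux, Bool.not_false, Finset.union_comm b a, not_forall, exists_prop,
      ← winsAux_swap_iff_not win n true, Bool.not_true]

theorem winsAux_insert_of_winsAux_succ (win : Finset V → Finset V → Prop)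
    (hmono : ∀ a b v, win a (insert v b) → win (insert v a) b) :
    ∀ (k : ℕ) (t : Bool) (a b : Finset V) (e : V), e ∉ a ∪ b →
      (Finset.univ \ (a ∪ b)).card = k + 1 →
      WinsAux win (k + 1) t a b → WinsAux win k t (insert e a) b
  | 0, true, a, b, e, he, hcard, ⟨v, hv, hwin⟩ => by
    have hfull : insert e a ∪ b = Finset.univ := card_sdiff_union_eq_zero_iff.mp
      (Finset.insert_union e a b ▸ card_sdiff_insert_of_card_sdiff he hcard)
    have hve : v = e := by
      have hv' : v ∈ insert e (a ∪ b) := Finset.insert_union e a b ▸ hfull ▸ Finset.mem_univ v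
      exact (Finset.mem_insert.mp hv').resolve_right (by simpa using hv)
    exact hve ▸ hwin
  | 0, false, a, b, e, he, _, hwin => hmono a b e (hwin e (by simpa using he))
  | k + 1, true, a, b, e, he, hcard, ⟨v, hv, hwin⟩ => by
    have hcard' : (Finset.univ \ (insert e a ∪ b)).card = k + 1 := by
      rw [Finset.insert_union]; exact card_sdiff_insert_of_card_sdiff he hcard
    by_cases hve : v = e
    · -- the strategy asks for `e`, which is already ours: claim any other free vertex instead
      subst hve
      obtain ⟨e', he'⟩ : (Finset.univ \ (insert v a ∪ b)).Nonempty :=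
        Finset.card_pos.mp (by omega)
      exact ⟨e', he', winsAux_insert_of_winsAux_succ win hmono k false _ b e'
        (by simpa using he') hcard' hwin⟩
    · have hv' : v ∉ a ∪ b := by simpa using hv
      refine ⟨v, by simp_all, Finset.insert_comm v e a ▸ ?_⟩
      refine winsAux_insert_of_winsAux_succ win hmono k false (insert v a) b e
        (by simp_all [Ne.symm hve]) ?_ hwin
      rw [Finset.insert_union]; exact card_sdiff_insert_of_card_sdiff hv' hcard
  | k + 1, false, a, b, e, he, hcard, hwin => by
    intro v hv
    have hv' : v ∉ a ∪ b := by simp_all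
    refine winsAux_insert_of_winsAux_succ win hmono k true a (insert v b) e
      (by simp_all [Ne.symm]) ?_ (hwin v (by simpa using hv'))
    rw [Finset.union_insert]; exact card_sdiff_insert_of_card_sdiff hv' hcard

theorem exists_final_position_of_winsAux (w₁ w₂ : Finset V → Finset V → Prop) :
    ∀ (n : ℕ) (t : Bool) (a b : Finset V), Disjoint a b →
      (Finset.univ \ (a ∪ b)).card = n → WinsAux w₁ n t a b → WinsAux w₂ n (!t) b a →
      ∃ a' b', Disjoint a' b' ∧ a' ∪ b' = Finset.univ ∧ w₁ a' b' ∧ w₂ b' a'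
  | 0, _, a, b, hab, hcard, h₁, h₂ => ⟨a, b, hab, card_sdiff_union_eq_zero_iff.mp hcard, h₁, h₂⟩
  | n + 1, true, a, b, hab, hcard, ⟨v, hv, h₁⟩, h₂ => by
    have hv' : v ∉ a ∪ b := by simpa using hv
    refine exists_final_position_of_winsAux w₁ w₂ n false (insert v a) b ?_ ?_ h₁
      (h₂ v (by rwa [Finset.union_comm]))
    · exact Finset.disjoint_insert_left.mpr ⟨fun h => hv' (Finset.mem_union_right a h), hab⟩
    · rw [Finset.insert_union]; exact card_sdiff_insert_of_card_sdiff hv' hcard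
  | n + 1, false, a, b, hab, hcard, h₁, ⟨v, hv, h₂⟩ => by
    have hv' : v ∉ a ∪ b := by simpa [Finset.union_comm] using hv
    refine exists_final_position_of_winsAux w₁ w₂ n true a (insert v b) ?_ ?_
      (h₁ v (by simpa using hv')) h₂
    · exact Finset.disjoint_insert_right.mpr ⟨fun h => hv' (Finset.mem_union_left b h), hab⟩
    · rw [Finset.union_insert]; exact card_sdiff_insert_of_card_sdiff hv' hcard

theorem winsAux_true_of_winsAux_false (win : Finset V → Finset V → Prop)
    (hmono : ∀ a b v, win a (insert v b) → win (insert v a) b) {n : ℕ} {a b : Finset V}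
    (hcard : (Finset.univ \ (a ∪ b)).card = n) (h : WinsAux win n false a b) :
    WinsAux win n true a b := by
  cases n with
  | zero => exact h
  | succ k =>
    obtain ⟨e, he⟩ : (Finset.univ \ (a ∪ b)).Nonempty := Finset.card_pos.mp (by omega)
    exact ⟨e, he, winsAux_insert_of_winsAux_succ win hmono k false a b e (by simpa using he)
      hcard h⟩

lemma isTotalDomSet_of_union_eq_univ {G : SimpleGraph V} {a b : Finset V}
    (hab : a ∪ b = Finset.univ) (hb : ¬ ∃ v, ∀ u, G.Adj u v → u ∈ b) : IsTotalDomSet G a := by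
  push Not at hb
  intro v
  obtain ⟨u, huv, hub⟩ := hb v
  exact ⟨u, (Finset.mem_union.mp (hab ▸ Finset.mem_univ u)).resolve_right hub, huv⟩

/-- if `G` has no two disjoint total dominating sets (total domatic number at
most `1`), then Staller wins the S-game of the MBTD game on `G`. -/
theorem stmt7 {V : Type*} [Fintype V] [DecidableEq V] (G : SimpleGraph V)
    (h : ∀ A B : Finset V, IsTotalDomSet G A → IsTotalDomSet G B → ¬ Disjoint A B) :
    StallerWinsMBTD G false := by
  by_contra hS
  let W : Finset V → Finset V → Prop := fun _ b => ¬ ∃ v, ∀ u, G.Adj u v → u ∈ b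
  have hmono : ∀ a b v, W a (insert v b) → W (insert v a) b :=
    fun _ _ _ hW ⟨x, hx⟩ => hW ⟨x, fun u hu => Finset.mem_insert_of_mem (hx u hu)⟩
  have hcard : (Finset.univ \ ((∅ : Finset V) ∪ ∅)).card = Fintype.card V := by simp
  have hSgame : WinsAux W (Fintype.card V) false ∅ ∅ :=
    (winsAux_swap_iff_not _ _ true ∅ ∅).mpr hS
  have hDgame := winsAux_true_of_winsAux_false W hmono hcard hSgame
  obtain ⟨a, b, hab, hfull, ha, hb⟩ :=
    exists_final_position_of_winsAux W W _ true ∅ ∅ (Finset.disjoint_empty_left ∅) hcard hDgame hSgame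
  exact h a b (isTotalDomSet_of_union_eq_univ hfull ha)
    (isTotalDomSet_of_union_eq_univ (Finset.union_comm a b ▸ hfull) hb) hab

end MBTD
end

section
/- For all integers k ≥ 1 and n ≥ 2k, the graph G_{n,k} is an S graph for the Maker–Breaker total domination game. -/
namespace MBTD

variable {V : Type*} [Fintype V] [DecidableEq V]

/-- The bipartite graph `G_{n,k}` on `[n] ⊕ ([n] choose k)`, where `i ∈ [n]` is adjacent to a
`k`-subset `S` of `[n]` iff `i ∈ S`. -/
def Gnk (n k : ℕ) : SimpleGraph (Fin n ⊕ {s : Finset (Fin n) // s.card = k}) where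
  Adj x y :=
    match x, y with
    | Sum.inl i, Sum.inr S => i ∈ S.1
    | Sum.inr S, Sum.inl i => i ∈ S.1
    | _, _ => False
  symm := by
    constructor
    rintro (i | S) (j | T) h
    · exact h.elim
    · exact h
    · exact h
    · exact h.elim
  loopless := by
    constructor
    rintro (i | S) h <;> exact h.elim

section Stmt8Aux

variable (n k : ℕ)

/-- vertex type of `Gnk n k` -/
abbrev Vnk := Fin n ⊕ {s : Finset (Fin n) // s.card = k}

/-- left vertices claimed in `a` -/
def LA (a : Finset (Vnk n k)) : Finset (Fin n) :=
  Finset.univ.filter (fun i => Sum.inl i ∈ a)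

/-- unclaimed left vertices -/
def LU (a b : Finset (Vnk n k)) : Finset (Fin n) :=
  Finset.univ.filter (fun i => Sum.inl i ∉ a ∧ Sum.inl i ∉ b)

lemma win_of_LA {a : Finset (Vnk n k)} (h : k ≤ (LA n k a).card) :
    ∃ v : Vnk n k, ∀ u, (Gnk n k).Adj u v → u ∈ a := by
  obtain ⟨S, hS, hcard⟩ := Finset.exists_subset_card_eq h
  refine ⟨Sum.inr ⟨S, hcard⟩, ?_⟩
  rintro (i | T) hadj
  · have hi : i ∈ S := hadj
    have := hS hi
    simpa [LA] using this
  · exact hadj.elim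

lemma staller_aux :
    ∀ (m : ℕ) (turn : Bool) (a b : Finset (Vnk n k)),
      (Finset.univ \ (a ∪ b)).card = m →
      2 * k ≤ 2 * (LA n k a).card + (LU n k a b).card + (if turn then 1 else 0) →
      WinsAux (fun a _ => ∃ v : Vnk n k, ∀ u, (Gnk n k).Adj u v → u ∈ a) m turn a b := by
  intro m
  induction m with
  | zero =>
    intro turn a b hcard hcond
    have hLU : LU n k a b = ∅ := by
      have hempty : (Finset.univ \ (a ∪ b)) = ∅ := Finset.card_eq_zero.mp hcard
      ext i
      simp only [LU, Finset.mem_filter, Finset.mem_univ, true_and, Finset.notMem_empty,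
        iff_false]
      rintro ⟨ha, hb⟩
      have : (Sum.inl i : Vnk n k) ∈ Finset.univ \ (a ∪ b) := by
        simp [ha, hb]
      rw [hempty] at this
      exact absurd this (Finset.notMem_empty _)
    rw [hLU] at hcond
    simp only [Finset.card_empty] at hcond
    have hk' : k ≤ (LA n k a).card := by
      rcases turn with _ | _ <;> simp at hcond <;> omega
    exact win_of_LA n k hk'
  | succ m ih =>
    intro turn a b hcard hcond
    rcases turn with _ | _
    · -- turn = false : opponent moves
      intro v hv
      have hcard' : (Finset.univ \ (a ∪ insert v b)).card = m := by
        have heq : Finset.univ \ (a ∪ insert v b) = (Finset.univ \ (a ∪ b)).erase v := by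
          ext x
          simp only [Finset.mem_sdiff, Finset.mem_union, Finset.mem_insert, Finset.mem_erase,
            Finset.mem_univ, true_and]
          tauto
        rw [heq, Finset.card_erase_of_mem hv, hcard]; omega
      apply ih true a (insert v b) hcard'
      have hLUle : (LU n k a b).card ≤ (LU n k a (insert v b)).card + 1 := by
        rcases v with i0 | S
        · have heq : LU n k a (insert (Sum.inl i0) b) = (LU n k a b).erase i0 := by
            ext j
            simp only [LU, Finset.mem_filter, Finset.mem_univ, true_and, Finset.mem_erase,
              Finset.mem_insert]
            constructor
            · rintro ⟨ha, hb⟩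
              refine ⟨fun h => hb (Or.inl (by rw [h])), ha, fun h => hb (Or.inr h)⟩
            · rintro ⟨hne, ha, hb⟩
              refine ⟨ha, ?_⟩
              rintro (h | h)
              · exact hne (Sum.inl.injEq .. ▸ h)
              · exact hb h
          rw [heq]
          by_cases hi : i0 ∈ LU n k a b
          · rw [Finset.card_erase_of_mem hi]
            omega
          · rw [Finset.erase_eq_of_notMem hi]
            omega
        · have heq : LU n k a (insert (Sum.inr S) b) = LU n k a b := by
            ext j
            simp [LU]
          rw [heq]
          omega
      have e1 : (if (true = true) then (1:ℕ) else 0) = 1 := rfl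
      have e0 : (if (false = true) then (1:ℕ) else 0) = 0 := rfl
      rw [e0] at hcond
      rw [e1]
      omega
    · -- turn = true : Staller moves
      by_cases hka : k ≤ (LA n k a).card
      · -- already enough left vertices: claim anything
        have hne : (Finset.univ \ (a ∪ b)).Nonempty := by
          rw [← Finset.card_pos, hcard]; omega
        obtain ⟨v, hv⟩ := hne
        refine ⟨v, hv, ?_⟩
        have hcard' : (Finset.univ \ (insert v a ∪ b)).card = m := by
          have heq : Finset.univ \ (insert v a ∪ b) = (Finset.univ \ (a ∪ b)).erase v := by
            ext x
            simp only [Finset.mem_sdiff, Finset.mem_union, Finset.mem_insert, Finset.mem_erase,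
              Finset.mem_univ, true_and]
            tauto
          rw [heq, Finset.card_erase_of_mem hv, hcard]; omega
        apply ih false (insert v a) b hcard'
        have hsub : LA n k a ⊆ LA n k (insert v a) := by
          intro j hj
          simp only [LA, Finset.mem_filter, Finset.mem_univ, true_and, Finset.mem_insert] at hj ⊢
          exact Or.inr hj
        have := Finset.card_le_card hsub
        have e0 : (if (false = true) then (1:ℕ) else 0) = 0 := rfl
        rw [e0]
        omega
      · -- claim an unclaimed left vertex
        have hLUpos : 1 ≤ (LU n k a b).card := by
          have e1 : (if (true = true) then (1:ℕ) else 0) = 1 := rfl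
          rw [e1] at hcond
          omega
        obtain ⟨i, hi⟩ := Finset.card_pos.mp hLUpos
        simp only [LU, Finset.mem_filter, Finset.mem_univ, true_and] at hi
        have hv : (Sum.inl i : Vnk n k) ∈ Finset.univ \ (a ∪ b) := by
          simp [hi.1, hi.2]
        refine ⟨Sum.inl i, hv, ?_⟩
        have hcard' : (Finset.univ \ (insert (Sum.inl i) a ∪ b)).card = m := by
          have heq : Finset.univ \ (insert (Sum.inl i) a ∪ b)
              = (Finset.univ \ (a ∪ b)).erase (Sum.inl i) := by
            ext x
            simp only [Finset.mem_sdiff, Finset.mem_union, Finset.mem_insert, Finset.mem_erase,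
              Finset.mem_univ, true_and]
            tauto
          rw [heq, Finset.card_erase_of_mem hv, hcard]; omega
        apply ih false (insert (Sum.inl i) a) b hcard'
        have hLAeq : LA n k (insert (Sum.inl i) a) = insert i (LA n k a) := by
          ext j
          simp only [LA, Finset.mem_filter, Finset.mem_univ, true_and, Finset.mem_insert,
            Sum.inl.injEq]
        have hiLA : i ∉ LA n k a := by
          simp only [LA, Finset.mem_filter, Finset.mem_univ, true_and]
          exact hi.1
        have hLAcard : (LA n k (insert (Sum.inl i) a)).card = (LA n k a).card + 1 := by
          rw [hLAeq, Finset.card_insert_of_notMem hiLA]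
        have hLUeq : LU n k (insert (Sum.inl i) a) b = (LU n k a b).erase i := by
          ext j
          simp only [LU, Finset.mem_filter, Finset.mem_univ, true_and, Finset.mem_erase,
            Finset.mem_insert, Sum.inl.injEq]
          tauto
        have hiLU : i ∈ LU n k a b := by
          simp only [LU, Finset.mem_filter, Finset.mem_univ, true_and]
          exact hi
        have hLUcard : (LU n k (insert (Sum.inl i) a) b).card = (LU n k a b).card - 1 := by
          rw [hLUeq, Finset.card_erase_of_mem hiLU]
        have e1 : (if (true = true) then (1:ℕ) else 0) = 1 := rfl
        have e0 : (if (false = true) then (1:ℕ) else 0) = 0 := rfl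
        rw [e1] at hcond
        rw [e0]
        omega

end Stmt8Aux

/-- for all `k ≥ 1` and `n ≥ 2k`, the graph `G_{n,k}` is an `𝒮` graph. -/
theorem stmt8 (n k : ℕ) (hk : 1 ≤ k) (hn : 2 * k ≤ n) : IsS (Gnk n k) := by
  have hLA : (LA n k ∅).card = 0 := by simp [LA]
  have hLU : (LU n k ∅ ∅).card = n := by simp [LU]
  constructor
  · -- D-game: Dominator first, Staller tracked, turn = !true = false
    show WinsAux _ (Fintype.card (Vnk n k)) false ∅ ∅
    apply staller_aux
    · simp
    · rw [hLA, hLU]; simp; omega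
  · -- S-game: Staller first, turn = !false = true
    show WinsAux _ (Fintype.card (Vnk n k)) true ∅ ∅
    apply staller_aux
    · simp
    · rw [hLA, hLU]; simp; omega

end MBTD
end

section
/- For every positive integer d there exists a connected finite simple graph G with minimum degree δ(G) ≥ d such that Staller has a winning strategy in the S-game of the Maker–Breaker total domination game on G. In particular, no minimum degree condition is sufficient to guarantee that Dominator wins the S-game. -/
namespace MBTD

variable {V : Type*} [Fintype V] [DecidableEq V]

/- ### Auxiliary material -/


lemma winsAux_congr {win1 win2 : Finset V → Finset V → Prop}
    (h : ∀ a b, win1 a b ↔ win2 a b) :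
    ∀ n t a b, WinsAux win1 n t a b ↔ WinsAux win2 n t a b := by
  intro n
  induction n with
  | zero => intro t a b; exact h a b
  | succ n ih =>
    intro t a b
    cases t with
    | true =>
      simp only [WinsAux]
      exact exists_congr fun v => and_congr_right fun _ => ih _ _ _
    | false =>
      simp only [WinsAux]
      exact forall₂_congr fun v _ => ih _ _ _

lemma winsAux_image {W : Type*} [Fintype W] [DecidableEq W] (e : V ≃ W)
    (win : Finset W → Finset W → Prop) :
    ∀ n t (a b : Finset V),
      WinsAux (fun a b => win (a.image e) (b.image e)) n t a b ↔
        WinsAux win n t (a.image e) (b.image e) := by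
  intro n
  induction n with
  | zero => intro t a b; rfl
  | succ n ih =>
    intro t a b
    have hmem : ∀ (v : V) (a b : Finset V),
        v ∈ Finset.univ \ (a ∪ b) ↔ e v ∈ Finset.univ \ (a.image e ∪ b.image e) := by
      intro v a b
      simp [Finset.mem_sdiff, Finset.mem_union, e.injective.mem_finset_image]
    cases t with
    | true =>
      simp only [WinsAux]
      constructor
      · rintro ⟨v, hv, hw⟩
        refine ⟨e v, (hmem v a b).1 hv, ?_⟩
        rw [← Finset.image_insert]
        exact (ih _ _ _).1 hw
      · rintro ⟨w, hw, hwin⟩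
        refine ⟨e.symm w, ?_, ?_⟩
        · rw [hmem (e.symm w) a b, e.apply_symm_apply]; exact hw
        · rw [ih]
          rw [Finset.image_insert, e.apply_symm_apply]
          exact hwin
    | false =>
      simp only [WinsAux]
      constructor
      · intro h w hw
        have := h (e.symm w) (by rw [hmem (e.symm w) a b, e.apply_symm_apply]; exact hw)
        rw [ih, Finset.image_insert, e.apply_symm_apply] at this
        exact this
      · intro h v hv
        rw [ih, Finset.image_insert]
        exact h (e v) ((hmem v a b).1 hv)

lemma stallerWins_comap {W : Type*} [Fintype W] [DecidableEq W] (e : W ≃ V)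
    (G : SimpleGraph V) (df : Bool) (h : StallerWinsMBTD G df) :
    StallerWinsMBTD (G.comap e.toEmbedding) df := by
  unfold StallerWinsMBTD at *
  have hcard : Fintype.card W = Fintype.card V := Fintype.card_congr e
  rw [hcard]
  have := (winsAux_congr (win1 := fun (a _ : Finset W) =>
      ∃ v : W, ∀ u : W, (G.comap e.toEmbedding).Adj u v → u ∈ a)
    (win2 := fun a b => (fun (a' _ : Finset V) =>
      ∃ v : V, ∀ u : V, G.Adj u v → u ∈ a') (a.image e) (b.image e)) ?_
    (Fintype.card V) (!df) ∅ ∅)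
  · rw [this]
    exact (winsAux_image e (fun (a' _ : Finset V) =>
      ∃ v : V, ∀ u : V, G.Adj u v → u ∈ a') (Fintype.card V) (!df) ∅ ∅).2 (by simpa using h)
  · intro a b
    simp only [SimpleGraph.comap_adj, Equiv.coe_toEmbedding]
    constructor
    · rintro ⟨v, hv⟩
      refine ⟨e v, fun u hu => ?_⟩
      have := hv (e.symm u) (by rwa [e.apply_symm_apply])
      rw [Finset.mem_image]
      exact ⟨e.symm u, this, e.apply_symm_apply u⟩
    · rintro ⟨v, hv⟩
      refine ⟨e.symm v, fun u hu => ?_⟩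
      rw [e.apply_symm_apply] at hu
      have := hv (e u) hu
      rw [Finset.mem_image] at this
      obtain ⟨x, hx, hxe⟩ := this
      rwa [← e.injective hxe]



/-- Vertex type: `2*d` "core" vertices plus one vertex for each `d`-subset of the core. -/
abbrev VT (d : ℕ) := Fin (2*d) ⊕ {S : Finset (Fin (2*d)) // S.card = d}

/-- The graph: core vertices form a clique; each subset-vertex is joined to its elements. -/
def GT (d : ℕ) : SimpleGraph (VT d) where
  Adj u v := match u, v with
    | .inl x, .inl y => x ≠ y
    | .inl x, .inr S => x ∈ S.1
    | .inr S, .inl x => x ∈ S.1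
    | .inr _, .inr _ => False
  symm := ⟨by rintro (x|S) (y|T) h; exacts [Ne.symm h, h, h, h]⟩
  loopless := ⟨by rintro (x|S) h; exacts [h rfl, h]⟩

lemma GT_adj_inl_inl (d : ℕ) (x y : Fin (2*d)) :
    (GT d).Adj (Sum.inl x) (Sum.inl y) ↔ x ≠ y := Iff.rfl

lemma GT_adj_inl_inr (d : ℕ) (x : Fin (2*d)) (S) :
    (GT d).Adj (Sum.inl x) (Sum.inr S) ↔ x ∈ S.1 := Iff.rfl

lemma GT_connected (d : ℕ) (hd : 1 ≤ d) : (GT d).Connected := by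
  have h2d : 0 < 2*d := by omega
  have hinl : ∀ x y : Fin (2*d), (GT d).Reachable (Sum.inl x) (Sum.inl y) := by
    intro x y
    by_cases h : x = y
    · subst h; rfl
    · exact SimpleGraph.Adj.reachable h
  have hinr : ∀ S : {S : Finset (Fin (2*d)) // S.card = d},
      (GT d).Reachable (Sum.inr S) (Sum.inl ⟨0, h2d⟩) := by
    intro S
    have hne : S.1.Nonempty := Finset.card_pos.mp (by omega)
    obtain ⟨x, hx⟩ := hne
    have h1 : (GT d).Adj (Sum.inr S) (Sum.inl x) := hx
    exact h1.reachable.trans (hinl x _)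
  rw [SimpleGraph.connected_iff]
  refine ⟨?_, ⟨Sum.inl ⟨0, h2d⟩⟩⟩
  rintro (x|S) (y|T)
  · exact hinl x y
  · exact (hinl x _).trans (hinr T).symm
  · exact (hinr S).trans (hinl _ y)
  · exact (hinr S).trans (hinr T).symm

lemma GT_degree (d : ℕ) (hd : 1 ≤ d) (v : VT d) :
    d ≤ ((GT d).neighborSet v).ncard := by
  have key : ∀ (c : Finset (Fin (2*d))), c.card = d →
      (∀ x ∈ c, (GT d).Adj (Sum.inl x) v) → d ≤ ((GT d).neighborSet v).ncard := by
    intro c hc hadj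
    have hsub : ↑(c.image (Sum.inl : Fin (2*d) → VT d)) ⊆ (GT d).neighborSet v := by
      intro u hu
      simp only [Finset.coe_image, Set.mem_image, Finset.mem_coe] at hu
      obtain ⟨x, hx, rfl⟩ := hu
      exact ((hadj x hx).symm : (GT d).Adj v (Sum.inl x))
    have := Set.ncard_le_ncard hsub (Set.toFinite _)
    rwa [Set.ncard_coe_finset, Finset.card_image_of_injective _ Sum.inl_injective, hc] at this
  cases v with
  | inl x =>
    have hcard : d ≤ (Finset.univ.erase x).card := by
      rw [Finset.card_erase_of_mem (Finset.mem_univ x), Finset.card_univ, Fintype.card_fin]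
      omega
    obtain ⟨c, hcsub, hccard⟩ := Finset.exists_subset_card_eq hcard
    refine key c hccard fun y hy => ?_
    exact Finset.ne_of_mem_erase (hcsub hy)
  | inr S =>
    exact key S.1 S.2 fun y hy => hy


/-- The core vertices claimed by Staller. -/
def Ac (d : ℕ) (a : Finset (VT d)) : Finset (Fin (2*d)) :=
  Finset.univ.filter (fun x => Sum.inl x ∈ a)

/-- The unclaimed core vertices. -/
def Uc (d : ℕ) (a b : Finset (VT d)) : Finset (Fin (2*d)) :=
  Finset.univ.filter (fun x => Sum.inl x ∉ a ∧ Sum.inl x ∉ b)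

lemma Ac_mono (d : ℕ) {a a' : Finset (VT d)} (h : a ⊆ a') : Ac d a ⊆ Ac d a' := by
  intro x hx
  rw [Ac, Finset.mem_filter] at hx ⊢
  exact ⟨hx.1, h hx.2⟩

lemma sdiff_insert_left (d : ℕ) (v : VT d) (a b : Finset (VT d)) :
    Finset.univ \ (insert v a ∪ b) = (Finset.univ \ (a ∪ b)).erase v := by
  ext u
  simp only [Finset.mem_sdiff, Finset.mem_union, Finset.mem_erase, Finset.mem_univ,
    Finset.mem_insert, true_and]
  tauto

lemma sdiff_insert_right (d : ℕ) (v : VT d) (a b : Finset (VT d)) :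
    Finset.univ \ (a ∪ insert v b) = (Finset.univ \ (a ∪ b)).erase v := by
  ext u
  simp only [Finset.mem_sdiff, Finset.mem_union, Finset.mem_erase, Finset.mem_univ,
    Finset.mem_insert, true_and]
  tauto

lemma staller_core (d : ℕ) : ∀ (n : ℕ) (t : Bool) (a b : Finset (VT d)),
    (Finset.univ \ (a ∪ b)).card = n →
    d ≤ (Ac d a).card + ((Uc d a b).card + (if t then 1 else 0)) / 2 →
    WinsAux (fun a _ => ∃ v : VT d, ∀ u : VT d, (GT d).Adj u v → u ∈ a) n t a b := by
  intro n
  induction n with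
  | zero =>
    intro t a b hn hd2
    have hall : Finset.univ \ (a ∪ b) = ∅ := Finset.card_eq_zero.mp hn
    have hU : Uc d a b = ∅ := by
      rw [Finset.eq_empty_iff_forall_notMem]
      intro x hx
      rw [Uc, Finset.mem_filter] at hx
      have hm : (Sum.inl x : VT d) ∈ Finset.univ \ (a ∪ b) := by
        simp [Finset.mem_sdiff, hx.2.1, hx.2.2]
      rw [hall] at hm
      exact absurd hm (Finset.notMem_empty _)
    rw [hU] at hd2
    have hd3 : d ≤ (Ac d a).card := by
      cases t <;> simpa using hd2
    obtain ⟨s, hs, hscard⟩ := Finset.exists_subset_card_eq hd3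
    refine ⟨Sum.inr ⟨s, hscard⟩, ?_⟩
    rintro (x|T) hadj
    · have hx : x ∈ s := hadj
      have := hs hx
      rw [Ac, Finset.mem_filter] at this
      exact this.2
    · exact absurd hadj not_false
  | succ n ih =>
    intro t a b hn hd2
    cases t with
    | true =>
      by_cases hU : (Uc d a b).Nonempty
      · obtain ⟨x, hxU⟩ := hU
        have hx := hxU
        rw [Uc, Finset.mem_filter] at hx
        have hmem : (Sum.inl x : VT d) ∈ Finset.univ \ (a ∪ b) := by
          simp [Finset.mem_sdiff, hx.2.1, hx.2.2]
        refine ⟨Sum.inl x, hmem, ?_⟩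
        apply ih
        · rw [sdiff_insert_left, Finset.card_erase_of_mem hmem, hn]
          omega
        · have hA : Ac d (insert (Sum.inl x) a) = insert x (Ac d a) := by
            ext y
            simp only [Ac, Finset.mem_filter, Finset.mem_univ, true_and, Finset.mem_insert,
              Sum.inl.injEq]
          have hxA : x ∉ Ac d a := by
            rw [Ac, Finset.mem_filter]
            exact fun h => hx.2.1 h.2
          have hU' : Uc d (insert (Sum.inl x) a) b = (Uc d a b).erase x := by
            ext y
            simp only [Uc, Finset.mem_filter, Finset.mem_univ, true_and, Finset.mem_erase,
              Finset.mem_insert, Sum.inl.injEq, not_or]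
            tauto
          have hU1 : 1 ≤ (Uc d a b).card := Finset.card_pos.mpr ⟨x, hxU⟩
          rw [hA, hU', Finset.card_insert_of_notMem hxA, Finset.card_erase_of_mem hxU]
          norm_num at hd2 ⊢
          omega
      · rw [Finset.not_nonempty_iff_eq_empty] at hU
        have hne : (Finset.univ \ (a ∪ b)).Nonempty := Finset.card_pos.mp (by omega)
        obtain ⟨v, hv⟩ := hne
        refine ⟨v, hv, ?_⟩
        apply ih
        · rw [sdiff_insert_left, Finset.card_erase_of_mem hv, hn]
          omega
        · rw [hU] at hd2
          norm_num at hd2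
          have hAm : (Ac d a).card ≤ (Ac d (insert v a)).card :=
            Finset.card_le_card (Ac_mono d (Finset.subset_insert v a))
          omega
    | false =>
      intro v hv
      apply ih
      · rw [sdiff_insert_right, Finset.card_erase_of_mem hv, hn]
        omega
      · have hUge : (Uc d a b).card - 1 ≤ (Uc d a (insert v b)).card := by
          cases v with
          | inl x =>
            have hUeq : Uc d a (insert (Sum.inl x) b) = (Uc d a b).erase x := by
              ext y
              simp only [Uc, Finset.mem_filter, Finset.mem_univ, true_and, Finset.mem_erase,
                Finset.mem_insert, Sum.inl.injEq, not_or]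
              tauto
            rw [hUeq]
            exact Finset.pred_card_le_card_erase
          | inr S =>
            have hUeq : Uc d a (insert (Sum.inr S) b) = Uc d a b := by
              ext y
              simp only [Uc, Finset.mem_filter, Finset.mem_univ, true_and,
                Finset.mem_insert, not_or]
              tauto
            rw [hUeq]
            omega
        norm_num at hd2 ⊢
        omega

lemma staller_wins_scratch (d : ℕ) (hd : 1 ≤ d) :
    WinsAux (fun a _ => ∃ v : VT d, ∀ u : VT d, (GT d).Adj u v → u ∈ a)
      (Fintype.card (VT d)) true ∅ ∅ := by
  apply staller_core
  · simp [Finset.card_univ]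
  · have hA : Ac d (∅ : Finset (VT d)) = ∅ := by
      rw [Ac, Finset.eq_empty_iff_forall_notMem]
      intro x hx
      rw [Finset.mem_filter] at hx
      exact absurd hx.2 (Finset.notMem_empty _)
    have hUeq : Uc d (∅ : Finset (VT d)) ∅ = Finset.univ := by
      rw [Uc]
      ext y
      simp
    rw [hA, hUeq, Finset.card_empty, Finset.card_univ, Fintype.card_fin]
    simp
    omega


/-- for every `d ≥ 1` there is a connected graph with minimum degree at least `d`
on which Staller wins the S-game of the MBTD game; hence no minimum degree condition
guarantees that Dominator wins the S-game. -/
theorem stmt9 (d : ℕ) (hd : 1 ≤ d) :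
    ∃ (N : ℕ) (G : SimpleGraph (Fin N)),
      G.Connected ∧ (∀ v : Fin N, d ≤ (G.neighborSet v).ncard) ∧
      StallerWinsMBTD G false := by
  classical
  let e : Fin (Fintype.card (VT d)) ≃ VT d := (Fintype.equivFin (VT d)).symm
  refine ⟨Fintype.card (VT d), (GT d).comap e.toEmbedding, ?_, ?_, ?_⟩
  · exact (SimpleGraph.Iso.comap e (GT d)).connected_iff.mpr (GT_connected d hd)
  · intro v
    have hset : ((GT d).comap e.toEmbedding).neighborSet v =
        ⇑e ⁻¹' ((GT d).neighborSet (e v)) := by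
      ext u
      simp [SimpleGraph.mem_neighborSet, SimpleGraph.comap_adj]
    have himg : ⇑e ⁻¹' ((GT d).neighborSet (e v)) =
        ⇑e.symm '' ((GT d).neighborSet (e v)) := by
      rw [Equiv.image_eq_preimage_symm]
      simp
    rw [hset, himg, Set.ncard_image_of_injective _ e.symm.injective]
    exact GT_degree d hd (e v)
  · refine stallerWins_comap e (GT d) false ?_
    show WinsAux _ (Fintype.card (VT d)) true ∅ ∅
    exact staller_wins_scratch d hd

end MBTD
end

section
/- (Amalgamation Lemma) Let G be a finite simple graph that is the union of two subgraphs G_1 and G_2 with G_0 = G_1 ∩ G_2 (the amalgam of G_1 and G_2 over G_0). Suppose Staller has a winning strategy in the Maker–Breaker total domination game on G_1 (as first player, respectively as second player) such that against every sequence of moves of the opponent she wins by claiming, in G_1, all vertices of the open neighborhood of some vertex belonging to V(G_1) \ V(G_2). Then Staller has a winning strategy in the Maker–Breaker total domination game on G (as first player, respectively as second player). -/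
/-!
Staller plays her `G₁`-strategy inside `G`. When Dominator claims a vertex that is not available
in the simulated game on `G₁`, Staller pretends he claimed some arbitrary vertex that is still
unclaimed there; such phantom moves only hand the simulated Dominator extra vertices, so the
strategy still wins. At the end Staller owns the `G₁`-neighbourhood of some `v ∉ V(G₂)`, and
since every edge of `G` lies in `G₁` or `G₂`, this is the whole `G`-neighbourhood of `v`.
-/

open Finset

lemma Finset.exists_mem_map_erase_subset_erase {α β : Type*} [DecidableEq α] [DecidableEq β]
    (f : α ↪ β) {s : Finset α} {t : Finset β} (hs : s.Nonempty) (hst : s.map f ⊆ t) (x : β) :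
    ∃ w ∈ s, (s.erase w).map f ⊆ t.erase x := by
  by_cases hx : ∃ w ∈ s, f w = x
  · obtain ⟨w, hw, rfl⟩ := hx
    exact ⟨w, hw, by simpa only [map_erase] using erase_subset_erase (f w) hst⟩
  · obtain ⟨w, hw⟩ := hs
    refine ⟨w, hw, fun y hy => mem_erase.mpr ⟨?_, hst (map_subset_map.mpr (erase_subset w s) hy)⟩⟩
    rintro rfl
    obtain ⟨u, hu, rfl⟩ := mem_map.mp hy
    exact hx ⟨u, mem_of_mem_erase hu, rfl⟩

lemma SimpleGraph.Subgraph.adj_left_of_sup_eq_top {V : Type*} {G : SimpleGraph V}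
    {G₁ G₂ : G.Subgraph} (hsup : G₁ ⊔ G₂ = ⊤) {u v : V} (huv : G.Adj u v) (hv : v ∉ G₂.verts) :
    G₁.Adj u v := by
  have : (G₁ ⊔ G₂).Adj u v := hsup ▸ huv
  exact this.resolve_right fun h₂ => hv h₂.snd_mem

namespace MBTD

variable {V : Type*} [Fintype V] [DecidableEq V]

def WinsFrom (win : Finset V → Finset V → Prop) (turn : Bool) (a b : Finset V) : Prop :=
  WinsAux win #(univ \ (a ∪ b)) turn a b

section WinsFrom

variable {win : Finset V → Finset V → Prop} {a b : Finset V}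

lemma winsFrom_iff_of_unclaimed_eq_empty (h : univ \ (a ∪ b) = ∅) (turn : Bool) :
    WinsFrom win turn a b ↔ win a b := by
  rw [WinsFrom, h, card_empty, WinsAux]

lemma card_unclaimed_insert_left {v : V} (hv : v ∈ univ \ (a ∪ b)) :
    #(univ \ (insert v a ∪ b)) + 1 = #(univ \ (a ∪ b)) := by
  rw [insert_union, sdiff_insert]
  exact card_erase_add_one hv

lemma card_unclaimed_insert_right {v : V} (hv : v ∈ univ \ (a ∪ b)) :
    #(univ \ (a ∪ insert v b)) + 1 = #(univ \ (a ∪ b)) := by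
  rw [union_insert, sdiff_insert]
  exact card_erase_add_one hv

lemma winsFrom_true_iff (h : (univ \ (a ∪ b)).Nonempty) :
    WinsFrom win true a b ↔ ∃ v ∈ univ \ (a ∪ b), WinsFrom win false (insert v a) b := by
  obtain ⟨m, hm⟩ := Nat.exists_eq_add_one_of_ne_zero (card_pos.mpr h).ne'
  rw [WinsFrom, hm, WinsAux]
  refine exists_congr fun v => and_congr_right fun hv => ?_
  have hcard : #(univ \ (insert v a ∪ b)) = m := by
    have := card_unclaimed_insert_left hv
    omega
  rw [WinsFrom, hcard]

lemma winsFrom_false_iff (h : (univ \ (a ∪ b)).Nonempty) :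
    WinsFrom win false a b ↔ ∀ v ∈ univ \ (a ∪ b), WinsFrom win true a (insert v b) := by
  obtain ⟨m, hm⟩ := Nat.exists_eq_add_one_of_ne_zero (card_pos.mpr h).ne'
  rw [WinsFrom, hm, WinsAux]
  refine forall₂_congr fun v hv => ?_
  have hcard : #(univ \ (a ∪ insert v b)) = m := by
    have := card_unclaimed_insert_right hv
    omega
  rw [WinsFrom, hcard]

lemma winsFrom_of_forall_superset (hwin : ∀ a' b', a ⊆ a' → win a' b') (turn : Bool) :
    WinsFrom win turn a b := by
  induction hn : #(univ \ (a ∪ b)) generalizing turn a b with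
  | zero =>
    exact (winsFrom_iff_of_unclaimed_eq_empty (card_eq_zero.mp hn) turn).mpr (hwin a b subset_rfl)
  | succ n ih =>
    have hne : (univ \ (a ∪ b)).Nonempty := card_pos.mp (by omega)
    cases turn
    · refine (winsFrom_false_iff hne).mpr fun x hx => ih hwin true ?_
      have := card_unclaimed_insert_right hx
      omega
    · obtain ⟨x, hx⟩ := hne
      refine (winsFrom_true_iff ⟨x, hx⟩).mpr ⟨x, hx, ?_⟩
      refine ih (fun a' b' ha' => hwin a' b' ((subset_insert x a).trans ha')) false ?_
      have := card_unclaimed_insert_left hx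
      omega

end WinsFrom

section Simulation

variable {W : Type*} [Fintype W] [DecidableEq W]
  {win₁ : Finset W → Finset W → Prop} {win : Finset V → Finset V → Prop}

lemma winsFrom_of_simulation (f : W ↪ V)
    (hwin : ∀ a₁ b₁ a b, win₁ a₁ b₁ → a₁.map f ⊆ a → win a b)
    (turn : Bool) (a b : Finset V) (a₁ b₁ : Finset W) (h₁ : WinsFrom win₁ turn a₁ b₁)
    (ha : a₁.map f ⊆ a) (hfree : (univ \ (a₁ ∪ b₁)).map f ⊆ univ \ (a ∪ b)) :
    WinsFrom win turn a b := by
  induction hn : #(univ \ (a ∪ b)) generalizing turn a b a₁ b₁ with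
  | zero =>
    have hfree₁ : univ \ (a₁ ∪ b₁) = ∅ :=
      map_eq_empty.mp (subset_empty.mp (card_eq_zero.mp hn ▸ hfree))
    rw [winsFrom_iff_of_unclaimed_eq_empty hfree₁] at h₁
    exact (winsFrom_iff_of_unclaimed_eq_empty (card_eq_zero.mp hn) turn).mpr (hwin _ _ _ _ h₁ ha)
  | succ n ih =>
    have hne : (univ \ (a ∪ b)).Nonempty := card_pos.mp (by omega)
    have card_insert_left {x} (hx : x ∈ univ \ (a ∪ b)) : #(univ \ (insert x a ∪ b)) = n := by
      have := card_unclaimed_insert_left hx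
      omega
    have card_insert_right {x} (hx : x ∈ univ \ (a ∪ b)) : #(univ \ (a ∪ insert x b)) = n := by
      have := card_unclaimed_insert_right hx
      omega
    rcases (univ \ (a₁ ∪ b₁)).eq_empty_or_nonempty with hfree₁ | hne₁
    · rw [winsFrom_iff_of_unclaimed_eq_empty hfree₁] at h₁
      exact winsFrom_of_forall_superset (fun a' b' ha' => hwin _ _ a' b' h₁ (ha.trans ha')) turn
    cases turn
    · refine (winsFrom_false_iff hne).mpr fun x hx => ?_
      obtain ⟨w, hw, hsub⟩ := exists_mem_map_erase_subset_erase f hne₁ hfree x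
      refine ih true a (insert x b) a₁ (insert w b₁) ((winsFrom_false_iff hne₁).mp h₁ w hw) ha
        ?_ (card_insert_right hx)
      rwa [union_insert, sdiff_insert, union_insert, sdiff_insert]
    · obtain ⟨v, hv, h₁'⟩ := (winsFrom_true_iff hne₁).mp h₁
      have hfv : f v ∈ univ \ (a ∪ b) := hfree (mem_map_of_mem f hv)
      refine (winsFrom_true_iff hne).mpr ⟨f v, hfv, ih false (insert (f v) a) b _ _ h₁' ?_ ?_
        (card_insert_left hfv)⟩
      · rw [map_insert]
        exact insert_subset_insert _ ha
      · rw [insert_union, sdiff_insert, insert_union, sdiff_insert, map_erase]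
        exact erase_subset_erase _ hfree

lemma winsAux_card_of_embedding (f : W ↪ V)
    (hwin : ∀ a₁ b₁ a b, win₁ a₁ b₁ → a₁.map f ⊆ a → win a b) (turn : Bool)
    (h : WinsAux win₁ (Fintype.card W) turn ∅ ∅) : WinsAux win (Fintype.card V) turn ∅ ∅ := by
  have hstart := winsFrom_of_simulation f hwin turn ∅ ∅ ∅ ∅ (by simpa [WinsFrom] using h)
    (by simp) (by simp)
  simpa [WinsFrom] using hstart

end Simulation

/-- Amalgamation Lemma: let `G` be the amalgam of its subgraphs `G₁` and `G₂`
(that is, `G₁ ⊔ G₂ = ⊤`).  Suppose Staller, playing the MBTD game on `G₁` (moving first iff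
`stallerFirst`), has a strategy guaranteeing that at the end of the game she has claimed the
whole open neighbourhood (in `G₁`) of some vertex of `V(G₁) \ V(G₂)`.  Then Staller has a
winning strategy in the MBTD game on `G` (moving first iff `stallerFirst`). -/
theorem stmt12 {V : Type*} [Fintype V] [DecidableEq V] (G : SimpleGraph V)
    (G₁ G₂ : G.Subgraph) (hamalg : G₁ ⊔ G₂ = ⊤)
    [Fintype ↥G₁.verts] (stallerFirst : Bool)
    (h : WinsAux (V := ↥G₁.verts)
      (fun a _ => ∃ v : ↥G₁.verts, (↑v : V) ∉ G₂.verts ∧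
        ∀ u : ↥G₁.verts, G₁.Adj ↑u ↑v → u ∈ a)
      (Fintype.card ↥G₁.verts) stallerFirst ∅ ∅) :
    StallerWinsMBTD G (!stallerFirst) := by
  rw [StallerWinsMBTD, Bool.not_not]
  refine winsAux_card_of_embedding (Function.Embedding.subtype _) ?_ stallerFirst h
  rintro a₁ - a - ⟨v, hv₂, hv⟩ ha
  refine ⟨v, fun u hu => ?_⟩
  have hu₁ : G₁.Adj u v := SimpleGraph.Subgraph.adj_left_of_sup_eq_top hamalg hu hv₂
  exact ha (mem_map_of_mem _ (hv ⟨u, G₁.edge_vert hu₁⟩ hu₁))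

end MBTD
end

section
/- For all integers k ≥ 1 and m ≥ 3, the Cartesian product P_{2k} □ C_m of the path on 2k vertices with the cycle on m vertices is a D graph for the Maker–Breaker total domination game. -/
namespace MBTD

variable {V : Type*} [Fintype V] [DecidableEq V]

/-! Dominator wins by a pairing strategy: if the vertices are split into pairs so that every
open neighbourhood contains a whole pair, he answers each move of Staller with its partner and
ends up with a vertex of every pair. In `P_{2k} □ C_m` pair `(2i, j)` with `(2i+1, j+1)`: the
neighbourhood of `(2i, j)` contains the pair of `(2i, j-1)`, that of `(2i+1, j)` the pair of
`(2i, j)`. -/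

open Finset

section Pairing

variable (win : Finset V → Finset V → Prop) {f : V → V}

/-- The tracked player answers each opponent move `w` by `f w` if it is free, and moves
arbitrarily otherwise. -/
theorem winsAux_of_pairing (hf : Function.Involutive f) (hne : ∀ v, f v ≠ v)
    (hwin : ∀ a b, (∀ v, v ∈ a ∨ f v ∈ a) → win a b) :
    ∀ (n : ℕ) (turn : Bool) (a b : Finset V), #(univ \ (a ∪ b)) = n →
      (∀ v ∈ b, f v ∈ a) → WinsAux win n turn a b
  | 0, _, a, b, hn, hb => by
    refine hwin a b fun v => ?_
    have hv : v ∈ a ∪ b := by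
      by_contra hv
      simpa [hn] using card_pos.2 ⟨v, mem_sdiff.2 ⟨mem_univ v, hv⟩⟩
    rcases mem_union.1 hv with hva | hvb
    exacts [Or.inl hva, Or.inr (hb v hvb)]
  | n + 1, true, a, b, hn, hb => by
    obtain ⟨v, hv⟩ : (univ \ (a ∪ b)).Nonempty := card_pos.1 (by omega)
    refine ⟨v, hv, winsAux_of_pairing hf hne hwin n false _ b ?_
      fun u hu => mem_insert_of_mem (hb u hu)⟩
    rw [insert_union, sdiff_insert, card_erase_of_mem hv, hn, Nat.add_sub_cancel]
  | n + 1, false, a, b, hn, hb => fun w hw => by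
    have hcard : #(univ \ (a ∪ insert w b)) = n := by
      rw [union_insert, sdiff_insert, card_erase_of_mem hw, hn, Nat.add_sub_cancel]
    by_cases hfw : f w ∈ a
    · refine winsAux_of_pairing hf hne hwin n true a _ hcard fun u hu => ?_
      rcases mem_insert.1 hu with rfl | hu
      exacts [hfw, hb u hu]
    have hfw_free : f w ∈ univ \ (a ∪ insert w b) := by
      have hfwb : f w ∉ b := fun h => (mem_sdiff.1 hw).2 (mem_union_left _ (hf w ▸ hb _ h))
      simp [hfw, hfwb, hne w]
    cases n with
    | zero => exact absurd hcard (card_pos.2 ⟨_, hfw_free⟩).ne'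
    | succ n =>
      refine ⟨f w, hfw_free, winsAux_of_pairing hf hne hwin n false _ _ ?_ fun u hu => ?_⟩
      · rw [insert_union, sdiff_insert, card_erase_of_mem hfw_free, hcard, Nat.add_sub_cancel]
      · rcases mem_insert.1 hu with rfl | hu
        exacts [mem_insert_self _ _, mem_insert_of_mem (hb u hu)]

theorem dominatorWinsMBTD_of_pairing (G : SimpleGraph V) (hf : Function.Involutive f)
    (hne : ∀ v, f v ≠ v) (hadj : ∀ v, ∃ u, G.Adj u v ∧ G.Adj (f u) v) (dFirst : Bool) :
    DominatorWinsMBTD G dFirst := by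
  refine winsAux_of_pairing _ hf hne (fun a _ ha v => ?_) _ _ _ _ (by simp) (by simp)
  obtain ⟨u, hu, hfu⟩ := hadj v
  rcases ha u with hua | hfua
  exacts [⟨u, hua, hu⟩, ⟨f u, hfua, hfu⟩]

theorem isD_of_pairing (G : SimpleGraph V) (hf : Function.Involutive f) (hne : ∀ v, f v ≠ v)
    (hadj : ∀ v, ∃ u, G.Adj u v ∧ G.Adj (f u) v) : IsD G :=
  ⟨dominatorWinsMBTD_of_pairing G hf hne hadj true,
    dominatorWinsMBTD_of_pairing G hf hne hadj false⟩

end Pairing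

section BoxProd

variable {α β : Type*} [LinearOrder α] {σ : α → α} {τ : Equiv.Perm β}

def boxPairing (σ : α → α) (τ : Equiv.Perm β) (x : α × β) : α × β :=
  if x.1 < σ x.1 then (σ x.1, τ x.2) else (σ x.1, τ.symm x.2)

theorem boxPairing_fst (x : α × β) : (boxPairing σ τ x).1 = σ x.1 := by
  unfold boxPairing
  split_ifs <;> rfl

theorem boxPairing_ne (hne : ∀ r, σ r ≠ r) (x : α × β) : boxPairing σ τ x ≠ x :=
  fun h => hne x.1 ((boxPairing_fst x).symm.trans (congrArg Prod.fst h))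

theorem boxPairing_involutive (hσ : Function.Involutive σ) (hne : ∀ r, σ r ≠ r) :
    Function.Involutive (boxPairing σ τ) := by
  rintro ⟨r, j⟩
  have hlt : σ r < r ↔ ¬ r < σ r := by rw [not_lt, (hne r).le_iff_lt]
  by_cases h : r < σ r <;> simp [boxPairing, h, hlt, hσ r]

theorem exists_adj_boxPairing_adj {G : SimpleGraph α} {H : SimpleGraph β}
    (hσ : Function.Involutive σ) (hG : ∀ r, G.Adj r (σ r)) (hH : ∀ j, H.Adj j (τ j))
    (x : α × β) : ∃ u, (G □ H).Adj u x ∧ (G □ H).Adj (boxPairing σ τ u) x := by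
  obtain ⟨r, j⟩ := x
  by_cases h : r < σ r
  · refine ⟨(r, τ.symm j), ?_, ?_⟩
    · simpa using hH (τ.symm j)
    · simpa [boxPairing, h] using (hG r).symm
  · have h' : σ r < r := (not_lt.1 h).lt_of_ne (hG r).ne'
    refine ⟨(σ r, j), ?_, ?_⟩
    · simpa using (hG r).symm
    · simpa [boxPairing, h', hσ r] using (hH j).symm

theorem isD_boxProd [Fintype α] [Fintype β] [DecidableEq β] {G : SimpleGraph α}
    {H : SimpleGraph β} (hσ : Function.Involutive σ) (hG : ∀ r, G.Adj r (σ r))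
    (hH : ∀ j, H.Adj j (τ j)) : IsD (G □ H) :=
  have hne : ∀ r, σ r ≠ r := fun r => (hG r).ne'
  isD_of_pairing _ (boxPairing_involutive hσ hne) (boxPairing_ne hne)
    (exists_adj_boxPairing_adj hσ hG hH)

end BoxProd

def pathMatching (k : ℕ) (r : Fin (2 * k)) : Fin (2 * k) :=
  ⟨if r.val % 2 = 0 then r.val + 1 else r.val - 1, by have := r.isLt; split_ifs <;> omega⟩

theorem pathMatching_involutive (k : ℕ) : Function.Involutive (pathMatching k) := by
  intro r
  ext
  simp only [pathMatching]
  split_ifs <;> omega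

theorem pathGraph_adj_pathMatching (k : ℕ) (r : Fin (2 * k)) :
    (SimpleGraph.pathGraph (2 * k)).Adj r (pathMatching k r) := by
  rw [SimpleGraph.pathGraph_adj]
  simp only [pathMatching]
  split_ifs <;> omega

theorem cycleGraph_adj_finRotate {m : ℕ} (hm : 2 ≤ m) (j : Fin m) :
    (SimpleGraph.cycleGraph m).Adj j (finRotate m j) := by
  obtain ⟨n, rfl⟩ : ∃ n, m = n + 2 := ⟨m - 2, by omega⟩
  rw [SimpleGraph.cycleGraph_adj, finRotate_apply]
  simp

theorem stmt14_general (k m : ℕ) (hm : 3 ≤ m) :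
    IsD (SimpleGraph.pathGraph (2 * k) □ SimpleGraph.cycleGraph m) :=
  isD_boxProd (pathMatching_involutive k) (pathGraph_adj_pathMatching k)
    (cycleGraph_adj_finRotate (by omega))

/-- for `k ≥ 1` and `m ≥ 3`, the graph `P_{2k} □ C_m` is a `𝒟` graph. -/
theorem stmt14 (k m : ℕ) (hk : 1 ≤ k) (hm : 3 ≤ m) :
    IsD (SimpleGraph.pathGraph (2 * k) □ SimpleGraph.cycleGraph m) :=
  stmt14_general k m hm

end MBTD
end

section
/- For every integer k ≥ 3 with k ≠ 4, Staller has a winning strategy in the S-game of the Maker–Breaker total domination game played on the Cartesian product P_3 □ C_k of the path on 3 vertices with the cycle on k vertices. -/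
namespace MBTD

variable {V : Type*} [Fintype V] [DecidableEq V]

section Aux

variable {V : Type*} [Fintype V] [DecidableEq V]

private lemma winsAux_done (P : Finset V → Prop)
    (hP : ∀ (a : Finset V) (v : V), P a → P (insert v a)) :
    ∀ (n : ℕ) (t : Bool) (a b : Finset V), P a → (a ∪ b).card + n ≤ Fintype.card V →
      WinsAux (fun a _ => P a) n t a b := by
  intro n
  induction n with
  | zero => intro t a b h _; exact h
  | succ n ih =>
    intro t a b h hc
    cases t with
    | false =>
      simp only [WinsAux]
      intro v _
      apply ih true a (insert v b) h
      have h1 := Finset.card_insert_le v (a ∪ b)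
      rw [Finset.union_insert]
      omega
    | true =>
      simp only [WinsAux]
      have hne : (Finset.univ \ (a ∪ b)).Nonempty := by
        rw [Finset.sdiff_nonempty]
        intro hsub
        have := Finset.card_le_card hsub
        rw [Finset.card_univ] at this
        omega
      obtain ⟨v, hv⟩ := hne
      refine ⟨v, hv, ih false (insert v a) b (hP a v h) ?_⟩
      have h1 := Finset.card_insert_le v (a ∪ b)
      rw [Finset.insert_union]
      omega

private lemma card32 (x1 x2 x3 y1 y2 : V) :
    ((insert x1 (insert x2 (insert x3 (∅:Finset V)))) ∪ (insert y1 (insert y2 (∅:Finset V)))).card ≤ 5 := by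
  have c1 := Finset.card_union_le (insert x1 (insert x2 (insert x3 (∅:Finset V))))
    (insert y1 (insert y2 (∅:Finset V)))
  have c2 := Finset.card_insert_le x1 (insert x2 (insert x3 (∅:Finset V)))
  have c3 := Finset.card_insert_le x2 (insert x3 (∅:Finset V))
  have c4 := Finset.card_insert_le x3 (∅:Finset V)
  have c5 := Finset.card_insert_le y1 (insert y2 (∅:Finset V))
  have c6 := Finset.card_insert_le y2 (∅:Finset V)
  have c7 : (∅:Finset V).card = 0 := Finset.card_empty
  omega

private lemma card43 (x1 x2 x3 x4 y1 y2 y3 : V) :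
    ((insert x1 (insert x2 (insert x3 (insert x4 (∅:Finset V))))) ∪
      (insert y1 (insert y2 (insert y3 (∅:Finset V))))).card ≤ 7 := by
  have c1 := Finset.card_union_le (insert x1 (insert x2 (insert x3 (insert x4 (∅:Finset V)))))
    (insert y1 (insert y2 (insert y3 (∅:Finset V))))
  have c2 := Finset.card_insert_le x1 (insert x2 (insert x3 (insert x4 (∅:Finset V))))
  have c3 := Finset.card_insert_le x2 (insert x3 (insert x4 (∅:Finset V)))
  have c4 := Finset.card_insert_le x3 (insert x4 (∅:Finset V))
  have c5 := Finset.card_insert_le x4 (∅:Finset V)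
  have c6 := Finset.card_insert_le y1 (insert y2 (insert y3 (∅:Finset V)))
  have c7 := Finset.card_insert_le y2 (insert y3 (∅:Finset V))
  have c8 := Finset.card_insert_le y3 (∅:Finset V)
  have c9 : (∅:Finset V).card = 0 := Finset.card_empty
  omega

/-- The key tactical lemma: from position `a = {s1}`, `b = {d1}` with Staller to move,
if Staller can play `s2` creating a threat at `u2` (missing only `m`), and if `m` is blocked
she can play `s3` creating the double threat at `u31` (missing `m1`) and `u32` (missing `m2`),
then Staller wins. -/
private lemma plan (G : SimpleGraph V) (s1 d1 s2 m s3 m1 m2 u2 u31 u32 : V)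
    (hu2 : ∀ w, G.Adj w u2 → w = s1 ∨ w = s2 ∨ w = m)
    (hu31 : ∀ w, G.Adj w u31 → w = s1 ∨ w = s2 ∨ w = s3 ∨ w = m1)
    (hu32 : ∀ w, G.Adj w u32 → w = s1 ∨ w = s2 ∨ w = s3 ∨ w = m2)
    (h21 : s2 ≠ s1) (h2d : s2 ≠ d1)
    (hma : m ≠ s1) (hmb : m ≠ s2) (hmd : m ≠ d1)
    (h3a : s3 ≠ s1) (h3b : s3 ≠ s2) (h3m : s3 ≠ m) (h3d : s3 ≠ d1)
    (hm1a : m1 ≠ s1) (hm1b : m1 ≠ s2) (hm1c : m1 ≠ s3) (hm1m : m1 ≠ m) (hm1d : m1 ≠ d1)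
    (hm2a : m2 ≠ s1) (hm2b : m2 ≠ s2) (hm2c : m2 ≠ s3) (hm2m : m2 ≠ m) (hm2e : m2 ≠ m1)
    (hm2d : m2 ≠ d1)
    (n : ℕ) (hn : 7 + n ≤ Fintype.card V) :
    WinsAux (fun (a : Finset V) (_ : Finset V) => ∃ v : V, ∀ u : V, G.Adj u v → u ∈ a)
      (n + 5) true (insert s1 ∅) (insert d1 ∅) := by
  have hmono : ∀ (a : Finset V) (v : V), (∃ x : V, ∀ u : V, G.Adj u x → u ∈ a) →
      (∃ x : V, ∀ u : V, G.Adj u x → u ∈ insert v a) :=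
    fun a v ⟨x, hx⟩ => ⟨x, fun u hu => Finset.mem_insert_of_mem (hx u hu)⟩
  rw [show n + 5 = n + 1 + 1 + 1 + 1 + 1 from by omega]
  simp only [WinsAux]
  refine ⟨s2, by simp [h21, h2d], ?_⟩
  intro d2 _
  by_cases hd2m : d2 = m
  · subst hd2m
    refine ⟨s3, by simp [h3a, h3b, h3m, h3d], ?_⟩
    intro d3 _
    by_cases hd31 : d3 = m1
    · subst hd31
      refine ⟨m2, by simp [hm2a, hm2b, hm2c, hm2m, hm2e, hm2d], ?_⟩
      refine winsAux_done (fun a => ∃ x : V, ∀ u : V, G.Adj u x → u ∈ a) hmono n false _ _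
        ⟨u32, fun w hw => by rcases hu32 w hw with rfl | rfl | rfl | rfl <;> simp⟩ ?_
      have := card43 m2 s3 s2 s1 d3 d2 d1
      omega
    · have hm1d3 : m1 ≠ d3 := fun h => hd31 h.symm
      refine ⟨m1, by simp [hm1a, hm1b, hm1c, hm1m, hm1d, hm1d3], ?_⟩
      refine winsAux_done (fun a => ∃ x : V, ∀ u : V, G.Adj u x → u ∈ a) hmono n false _ _
        ⟨u31, fun w hw => by rcases hu31 w hw with rfl | rfl | rfl | rfl <;> simp⟩ ?_
      have := card43 m1 s3 s2 s1 d3 d2 d1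
      omega
  · have hmd2 : m ≠ d2 := fun h => hd2m h.symm
    refine ⟨m, by simp [hma, hmb, hmd, hmd2], ?_⟩
    intro d3 _
    have hwin : ∃ x : V, ∀ u : V, G.Adj u x → u ∈ insert m (insert s2 (insert s1 (∅:Finset V))) :=
      ⟨u2, fun w hw => by rcases hu2 w hw with rfl | rfl | rfl <;> simp⟩
    have final : ∀ s4 : V, s4 ≠ m → s4 ≠ s2 → s4 ≠ s1 → s4 ≠ d1 → s4 ≠ d2 → s4 ≠ d3 →
        ∃ v ∈ Finset.univ \ (insert m (insert s2 (insert s1 ∅)) ∪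
          insert d3 (insert d2 (insert d1 ∅))),
          WinsAux (fun (a : Finset V) (_ : Finset V) => ∃ v : V, ∀ u : V, G.Adj u v → u ∈ a)
            n false (insert v (insert m (insert s2 (insert s1 ∅))))
            (insert d3 (insert d2 (insert d1 ∅))) := by
      intro s4 k1 k2 k3 k4 k5 k6
      refine ⟨s4, by simp [k1, k2, k3, k4, k5, k6], ?_⟩
      refine winsAux_done (fun a => ∃ x : V, ∀ u : V, G.Adj u x → u ∈ a) hmono n false _ _
        (hmono _ s4 hwin) ?_
      have := card43 s4 m s2 s1 d3 d2 d1
      omega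
    by_cases c1 : m1 ≠ d2 ∧ m1 ≠ d3
    · exact final m1 hm1m hm1b hm1a hm1d c1.1 c1.2
    · by_cases c2 : m2 ≠ d2 ∧ m2 ≠ d3
      · exact final m2 hm2m hm2b hm2a hm2d c2.1 c2.2
      · rw [not_and_or, not_ne_iff, not_ne_iff] at c1 c2
        have hs3d2 : s3 ≠ d2 := by
          rintro rfl
          rcases c1 with h | h
          · exact hm1c h
          · rcases c2 with h' | h'
            · exact hm2c h'
            · exact hm2e (h'.trans h.symm)
        have hs3d3 : s3 ≠ d3 := by
          rintro rfl
          rcases c1 with h | h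
          · rcases c2 with h' | h'
            · exact hm2e (h'.trans h.symm)
            · exact hm2c h'
          · exact hm1c h
        exact final s3 h3m h3b h3a h3d hs3d2 hs3d3

end Aux

open scoped Fin.CommRing Fin.NatCast Fin.IntCast

section Grid

variable {m : ℕ}

private lemma cyc_adj {u v : Fin (m+3)} :
    (SimpleGraph.cycleGraph (m+3)).Adj u v ↔ u - v = 1 ∨ v - u = 1 :=
  SimpleGraph.cycleGraph_adj (n := m+1)

private lemma nbhd0 (c c1 c2 : Fin (m+3)) (h1 : c + 1 = c1) (h2 : c - 1 = c2) :
    ∀ w : Fin 3 × Fin (m+3),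
      (SimpleGraph.pathGraph 3 □ SimpleGraph.cycleGraph (m+3)).Adj w ((0:Fin 3), c) →
      w = ((1:Fin 3), c) ∨ w = ((0:Fin 3), c1) ∨ w = ((0:Fin 3), c2) := by
  rintro ⟨wr, wc⟩ hw
  rw [SimpleGraph.boxProd_adj] at hw
  rcases hw with ⟨h, h'⟩ | ⟨h, h'⟩
  · have hc : wc = c := h'
    subst hc
    have hp : wr.val + 1 = (0:Fin 3).val ∨ (0:Fin 3).val + 1 = wr.val :=
      (SimpleGraph.pathGraph_adj).1 h
    have hv0 : (0:Fin 3).val = 0 := rfl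
    rw [hv0] at hp
    have hlt := wr.isLt
    left
    have : wr = 1 := by
      apply Fin.ext
      have hv1 : (1:Fin 3).val = 1 := rfl
      rw [hv1]; omega
    rw [this]
  · have hr : wr = (0:Fin 3) := h'
    subst hr
    have hc : wc - c = 1 ∨ c - wc = 1 := cyc_adj.1 h
    rcases hc with h'' | h''
    · right; left
      have : wc = c1 := by rw [← h1]; linear_combination h''
      rw [this]
    · right; right
      have : wc = c2 := by rw [← h2]; linear_combination -h''
      rw [this]

private lemma nbhd2 (c c1 c2 : Fin (m+3)) (h1 : c + 1 = c1) (h2 : c - 1 = c2) :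
    ∀ w : Fin 3 × Fin (m+3),
      (SimpleGraph.pathGraph 3 □ SimpleGraph.cycleGraph (m+3)).Adj w ((2:Fin 3), c) →
      w = ((1:Fin 3), c) ∨ w = ((2:Fin 3), c1) ∨ w = ((2:Fin 3), c2) := by
  rintro ⟨wr, wc⟩ hw
  rw [SimpleGraph.boxProd_adj] at hw
  rcases hw with ⟨h, h'⟩ | ⟨h, h'⟩
  · have hc : wc = c := h'
    subst hc
    have hp : wr.val + 1 = (2:Fin 3).val ∨ (2:Fin 3).val + 1 = wr.val :=
      (SimpleGraph.pathGraph_adj).1 h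
    have hv2 : (2:Fin 3).val = 2 := rfl
    rw [hv2] at hp
    have hlt := wr.isLt
    left
    have : wr = 1 := by
      apply Fin.ext
      have hv1 : (1:Fin 3).val = 1 := rfl
      rw [hv1]; omega
    rw [this]
  · have hr : wr = (2:Fin 3) := h'
    subst hr
    have hc : wc - c = 1 ∨ c - wc = 1 := cyc_adj.1 h
    rcases hc with h'' | h''
    · right; left
      have : wc = c1 := by rw [← h1]; linear_combination h''
      rw [this]
    · right; right
      have : wc = c2 := by rw [← h2]; linear_combination -h''
      rw [this]

private lemma nbhd1 (c c1 c2 : Fin (m+3)) (h1 : c + 1 = c1) (h2 : c - 1 = c2) :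
    ∀ w : Fin 3 × Fin (m+3),
      (SimpleGraph.pathGraph 3 □ SimpleGraph.cycleGraph (m+3)).Adj w ((1:Fin 3), c) →
      w = ((0:Fin 3), c) ∨ w = ((2:Fin 3), c) ∨ w = ((1:Fin 3), c1) ∨ w = ((1:Fin 3), c2) := by
  rintro ⟨wr, wc⟩ hw
  rw [SimpleGraph.boxProd_adj] at hw
  rcases hw with ⟨h, h'⟩ | ⟨h, h'⟩
  · have hc : wc = c := h'
    subst hc
    have hp : wr.val + 1 = (1:Fin 3).val ∨ (1:Fin 3).val + 1 = wr.val :=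
      (SimpleGraph.pathGraph_adj).1 h
    have hv1 : (1:Fin 3).val = 1 := rfl
    rw [hv1] at hp
    have hlt := wr.isLt
    rcases hp with hp | hp
    · left
      have : wr = 0 := by
        apply Fin.ext
        have hv0 : (0:Fin 3).val = 0 := rfl
        rw [hv0]; omega
      rw [this]
    · right; left
      have : wr = 2 := by
        apply Fin.ext
        have hv2 : (2:Fin 3).val = 2 := rfl
        rw [hv2]; omega
      rw [this]
  · have hr : wr = (1:Fin 3) := h'
    subst hr
    have hc : wc - c = 1 ∨ c - wc = 1 := cyc_adj.1 h
    rcases hc with h'' | h''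
    · right; right; left
      have : wc = c1 := by rw [← h1]; linear_combination h''
      rw [this]
    · right; right; right
      have : wc = c2 := by rw [← h2]; linear_combination -h''
      rw [this]

end Grid
set_option maxHeartbeats 1000000 in
/-- for `k ≥ 3`, `k ≠ 4`, Staller wins the S-game of the MBTD game on
`P₃ □ C_k`. -/
theorem stmt15 (k : ℕ) (hk : 3 ≤ k) (hk4 : k ≠ 4) :
    StallerWinsMBTD (SimpleGraph.pathGraph 3 □ SimpleGraph.cycleGraph k) false := by
  obtain ⟨m, rfl⟩ : ∃ m, k = m + 3 := ⟨k - 3, by omega⟩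
  have hm : m ≠ 1 := by omega
  -- basic column facts in `Fin (m+3)`
  have hA : (1 : Fin (m+3)) ≠ 0 := by simp [Fin.ext_iff]
  have hB : (2 : Fin (m+3)) ≠ 0 := by simp [Fin.ext_iff]; rw [Nat.mod_eq_of_lt (by omega)]; omega
  have hC : (4 : Fin (m+3)) ≠ 0 := by
    intro h
    have e : ((4:ℕ) : Fin (m+3)) = (4 : Fin (m+3)) := by norm_cast
    rw [← e] at h
    have := congrArg Fin.val h
    rw [Fin.val_natCast, Fin.val_zero] at this
    rcases m with _|_|m
    · simp at this
    · exact hm rfl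
    · rw [Nat.mod_eq_of_lt (by omega)] at this; omega
  have q20 : (2 : Fin (m+3)) ≠ 0 := hB
  have q02 : (0 : Fin (m+3)) ≠ 2 := Ne.symm hB
  have q31 : (3 : Fin (m+3)) ≠ 1 := fun h => hB (by linear_combination h)
  have q42 : (4 : Fin (m+3)) ≠ 2 := fun h => hB (by linear_combination h)
  have q40 : (4 : Fin (m+3)) ≠ 0 := hC
  have qm11 : (-1 : Fin (m+3)) ≠ 1 := fun h => hB (by linear_combination -h)
  have qm22 : (-2 : Fin (m+3)) ≠ 2 := fun h => hC (by linear_combination -h)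
  have qm20 : (-2 : Fin (m+3)) ≠ 0 := fun h => hB (by linear_combination -h)
  have q3m1 : (3 : Fin (m+3)) ≠ -1 := fun h => hC (by linear_combination h)
  -- row facts
  have r01 : (0 : Fin 3) ≠ 1 := by decide
  have r02 : (0 : Fin 3) ≠ 2 := by decide
  have r10 : (1 : Fin 3) ≠ 0 := by decide
  have r12 : (1 : Fin 3) ≠ 2 := by decide
  have r20 : (2 : Fin 3) ≠ 0 := by decide
  have r21 : (2 : Fin 3) ≠ 1 := by decide
  have PF : ∀ {r r' : Fin 3} {c c' : Fin (m+3)}, r ≠ r' →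
      ((r, c) : Fin 3 × Fin (m+3)) ≠ (r', c') := fun h e => h (congrArg Prod.fst e)
  have PS : ∀ {r r' : Fin 3} {c c' : Fin (m+3)}, c ≠ c' →
      ((r, c) : Fin 3 × Fin (m+3)) ≠ (r', c') := fun h e => h (congrArg Prod.snd e)
  have hn : 7 + (3*m+2) ≤ Fintype.card (Fin 3 × Fin (m+3)) := by
    simp [Fintype.card_prod]
    omega
  obtain ⟨N, hN⟩ : ∃ N, N = 3*m+2+5 := ⟨_, rfl⟩
  have hcard : Fintype.card (Fin 3 × Fin (m+3)) = N + 1 + 1 := by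
    rw [hN]
    simp [Fintype.card_prod]
    omega
  unfold StallerWinsMBTD
  rw [hcard]
  simp only [Bool.not_false, WinsAux]
  refine ⟨((1:Fin 3), (1:Fin (m+3))), by simp, ?_⟩
  intro d1 _
  rw [hN]
  by_cases e1 : d1 = ((0:Fin 3), (0:Fin (m+3)))
  · subst e1
    exact plan _ _ _ ((2:Fin 3),(2:Fin (m+3))) ((2:Fin 3),(0:Fin (m+3)))
      ((1:Fin 3),(3:Fin (m+3))) ((0:Fin 3),(2:Fin (m+3))) ((2:Fin 3),(4:Fin (m+3)))
      ((2:Fin 3),(1:Fin (m+3))) ((1:Fin 3),(2:Fin (m+3))) ((2:Fin 3),(3:Fin (m+3)))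
      (fun w hw => by rcases nbhd2 1 2 0 (by ring) (by ring) w hw with rfl|rfl|rfl <;> first | exact Or.inl rfl | exact Or.inr (Or.inl rfl) | exact Or.inr (Or.inr rfl) | exact Or.inr (Or.inr (Or.inl rfl)) | exact Or.inr (Or.inr (Or.inr rfl)))
      (fun w hw => by rcases nbhd1 2 3 1 (by ring) (by ring) w hw with rfl|rfl|rfl|rfl <;> first | exact Or.inl rfl | exact Or.inr (Or.inl rfl) | exact Or.inr (Or.inr rfl) | exact Or.inr (Or.inr (Or.inl rfl)) | exact Or.inr (Or.inr (Or.inr rfl)))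
      (fun w hw => by rcases nbhd2 3 4 2 (by ring) (by ring) w hw with rfl|rfl|rfl|rfl <;> first | exact Or.inl rfl | exact Or.inr (Or.inl rfl) | exact Or.inr (Or.inr rfl) | exact Or.inr (Or.inr (Or.inl rfl)) | exact Or.inr (Or.inr (Or.inr rfl)))
      (PF r21) (PF r20)
      (PF r21) (PS q02) (PF r20)
      (PS q31) (PF r12) (PF r12) (PF r10)
      (PF r01) (PF r02) (PF r01) (PF r02) (PS q20)
      (PF r21) (PS q42) (PF r21) (PS q40) (PF r20) (PF r20)
      (3*m+2) hn
  · by_cases e2 : d1 = ((2:Fin 3), (0:Fin (m+3)))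
    · subst e2
      exact plan _ _ _ ((0:Fin 3),(2:Fin (m+3))) ((0:Fin 3),(0:Fin (m+3)))
        ((1:Fin 3),(3:Fin (m+3))) ((2:Fin 3),(2:Fin (m+3))) ((0:Fin 3),(4:Fin (m+3)))
        ((0:Fin 3),(1:Fin (m+3))) ((1:Fin 3),(2:Fin (m+3))) ((0:Fin 3),(3:Fin (m+3)))
        (fun w hw => by rcases nbhd0 1 2 0 (by ring) (by ring) w hw with rfl|rfl|rfl <;> first | exact Or.inl rfl | exact Or.inr (Or.inl rfl) | exact Or.inr (Or.inr rfl) | exact Or.inr (Or.inr (Or.inl rfl)) | exact Or.inr (Or.inr (Or.inr rfl)))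
        (fun w hw => by rcases nbhd1 2 3 1 (by ring) (by ring) w hw with rfl|rfl|rfl|rfl <;> first | exact Or.inl rfl | exact Or.inr (Or.inl rfl) | exact Or.inr (Or.inr rfl) | exact Or.inr (Or.inr (Or.inl rfl)) | exact Or.inr (Or.inr (Or.inr rfl)))
        (fun w hw => by rcases nbhd0 3 4 2 (by ring) (by ring) w hw with rfl|rfl|rfl|rfl <;> first | exact Or.inl rfl | exact Or.inr (Or.inl rfl) | exact Or.inr (Or.inr rfl) | exact Or.inr (Or.inr (Or.inl rfl)) | exact Or.inr (Or.inr (Or.inr rfl)))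
        (PF r01) (PF r02)
        (PF r01) (PS q02) (PF r02)
        (PS q31) (PF r10) (PF r10) (PF r12)
        (PF r21) (PF r20) (PF r21) (PF r20) (PS q20)
        (PF r01) (PS q42) (PF r01) (PS q40) (PF r02) (PF r02)
        (3*m+2) hn
    · by_cases e3 : d1 = ((0:Fin 3), (2:Fin (m+3)))
      · subst e3
        exact plan _ _ _ ((2:Fin 3),(0:Fin (m+3))) ((2:Fin 3),(2:Fin (m+3)))
          ((1:Fin 3),(-1:Fin (m+3))) ((0:Fin 3),(0:Fin (m+3))) ((2:Fin 3),(-2:Fin (m+3)))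
          ((2:Fin 3),(1:Fin (m+3))) ((1:Fin 3),(0:Fin (m+3))) ((2:Fin 3),(-1:Fin (m+3)))
          (fun w hw => by rcases nbhd2 1 2 0 (by ring) (by ring) w hw with rfl|rfl|rfl <;> first | exact Or.inl rfl | exact Or.inr (Or.inl rfl) | exact Or.inr (Or.inr rfl) | exact Or.inr (Or.inr (Or.inl rfl)) | exact Or.inr (Or.inr (Or.inr rfl)))
          (fun w hw => by rcases nbhd1 0 1 (-1) (by ring) (by ring) w hw with rfl|rfl|rfl|rfl <;> first | exact Or.inl rfl | exact Or.inr (Or.inl rfl) | exact Or.inr (Or.inr rfl) | exact Or.inr (Or.inr (Or.inl rfl)) | exact Or.inr (Or.inr (Or.inr rfl)))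
          (fun w hw => by rcases nbhd2 (-1) 0 (-2) (by ring) (by ring) w hw with rfl|rfl|rfl|rfl <;> first | exact Or.inl rfl | exact Or.inr (Or.inl rfl) | exact Or.inr (Or.inr rfl) | exact Or.inr (Or.inr (Or.inl rfl)) | exact Or.inr (Or.inr (Or.inr rfl)))
          (PF r21) (PF r20)
          (PF r21) (PS q20) (PF r20)
          (PS qm11) (PF r12) (PF r12) (PF r10)
          (PF r01) (PF r02) (PF r01) (PF r02) (PS q02)
          (PF r21) (PS qm20) (PF r21) (PS qm22) (PF r20) (PF r20)
          (3*m+2) hn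
      · by_cases e4 : d1 = ((2:Fin 3), (2:Fin (m+3)))
        · subst e4
          exact plan _ _ _ ((0:Fin 3),(0:Fin (m+3))) ((0:Fin 3),(2:Fin (m+3)))
            ((1:Fin 3),(-1:Fin (m+3))) ((2:Fin 3),(0:Fin (m+3))) ((0:Fin 3),(-2:Fin (m+3)))
            ((0:Fin 3),(1:Fin (m+3))) ((1:Fin 3),(0:Fin (m+3))) ((0:Fin 3),(-1:Fin (m+3)))
            (fun w hw => by rcases nbhd0 1 2 0 (by ring) (by ring) w hw with rfl|rfl|rfl <;> first | exact Or.inl rfl | exact Or.inr (Or.inl rfl) | exact Or.inr (Or.inr rfl) | exact Or.inr (Or.inr (Or.inl rfl)) | exact Or.inr (Or.inr (Or.inr rfl)))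
            (fun w hw => by rcases nbhd1 0 1 (-1) (by ring) (by ring) w hw with rfl|rfl|rfl|rfl <;> first | exact Or.inl rfl | exact Or.inr (Or.inl rfl) | exact Or.inr (Or.inr rfl) | exact Or.inr (Or.inr (Or.inl rfl)) | exact Or.inr (Or.inr (Or.inr rfl)))
            (fun w hw => by rcases nbhd0 (-1) 0 (-2) (by ring) (by ring) w hw with rfl|rfl|rfl|rfl <;> first | exact Or.inl rfl | exact Or.inr (Or.inl rfl) | exact Or.inr (Or.inr rfl) | exact Or.inr (Or.inr (Or.inl rfl)) | exact Or.inr (Or.inr (Or.inr rfl)))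
            (PF r01) (PF r02)
            (PF r01) (PS q20) (PF r02)
            (PS qm11) (PF r10) (PF r10) (PF r12)
            (PF r21) (PF r20) (PF r21) (PF r20) (PS q02)
            (PF r01) (PS qm20) (PF r01) (PS qm22) (PF r02) (PF r02)
            (3*m+2) hn
        · by_cases e5 : d1 = ((1:Fin 3), (-1:Fin (m+3)))
          · subst e5
            exact plan _ _ _ ((0:Fin 3),(2:Fin (m+3))) ((0:Fin 3),(0:Fin (m+3)))
              ((2:Fin 3),(2:Fin (m+3))) ((2:Fin 3),(0:Fin (m+3))) ((1:Fin 3),(3:Fin (m+3)))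
              ((0:Fin 3),(1:Fin (m+3))) ((2:Fin 3),(1:Fin (m+3))) ((1:Fin 3),(2:Fin (m+3)))
              (fun w hw => by rcases nbhd0 1 2 0 (by ring) (by ring) w hw with rfl|rfl|rfl <;> first | exact Or.inl rfl | exact Or.inr (Or.inl rfl) | exact Or.inr (Or.inr rfl) | exact Or.inr (Or.inr (Or.inl rfl)) | exact Or.inr (Or.inr (Or.inr rfl)))
              (fun w hw => by rcases nbhd2 1 2 0 (by ring) (by ring) w hw with rfl|rfl|rfl <;> first | exact Or.inl rfl | exact Or.inr (Or.inl rfl) | exact Or.inr (Or.inr rfl) | exact Or.inr (Or.inr (Or.inl rfl)) | exact Or.inr (Or.inr (Or.inr rfl)))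
              (fun w hw => by rcases nbhd1 2 3 1 (by ring) (by ring) w hw with rfl|rfl|rfl|rfl <;> first | exact Or.inl rfl | exact Or.inr (Or.inl rfl) | exact Or.inr (Or.inr rfl) | exact Or.inr (Or.inr (Or.inl rfl)) | exact Or.inr (Or.inr (Or.inr rfl)))
              (PF r01) (PF r01)
              (PF r01) (PS q02) (PF r01)
              (PF r21) (PF r20) (PF r20) (PF r21)
              (PF r21) (PF r20) (PS q02) (PF r20) (PF r21)
              (PS q31) (PF r10) (PF r12) (PF r10) (PF r12) (PS q3m1)
              (3*m+2) hn
          · exact plan _ _ _ ((0:Fin 3),(0:Fin (m+3))) ((0:Fin 3),(2:Fin (m+3)))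
              ((2:Fin 3),(0:Fin (m+3))) ((2:Fin 3),(2:Fin (m+3))) ((1:Fin 3),(-1:Fin (m+3)))
              ((0:Fin 3),(1:Fin (m+3))) ((2:Fin 3),(1:Fin (m+3))) ((1:Fin 3),(0:Fin (m+3)))
              (fun w hw => by rcases nbhd0 1 2 0 (by ring) (by ring) w hw with rfl|rfl|rfl <;> first | exact Or.inl rfl | exact Or.inr (Or.inl rfl) | exact Or.inr (Or.inr rfl) | exact Or.inr (Or.inr (Or.inl rfl)) | exact Or.inr (Or.inr (Or.inr rfl)))
              (fun w hw => by rcases nbhd2 1 2 0 (by ring) (by ring) w hw with rfl|rfl|rfl <;> first | exact Or.inl rfl | exact Or.inr (Or.inl rfl) | exact Or.inr (Or.inr rfl) | exact Or.inr (Or.inr (Or.inl rfl)) | exact Or.inr (Or.inr (Or.inr rfl)))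
              (fun w hw => by rcases nbhd1 0 1 (-1) (by ring) (by ring) w hw with rfl|rfl|rfl|rfl <;> first | exact Or.inl rfl | exact Or.inr (Or.inl rfl) | exact Or.inr (Or.inr rfl) | exact Or.inr (Or.inr (Or.inl rfl)) | exact Or.inr (Or.inr (Or.inr rfl)))
              (PF r01) (fun h => e1 h.symm)
              (PF r01) (PS q20) (fun h => e3 h.symm)
              (PF r21) (PF r20) (PF r20) (fun h => e2 h.symm)
              (PF r21) (PF r20) (PS q20) (PF r20) (fun h => e4 h.symm)
              (PS qm11) (PF r10) (PF r12) (PF r10) (PF r12) (fun h => e5 h.symm)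
              (3*m+2) hn

end MBTD
end

section
/- For every integer k ≥ 2, the complete bipartite graph K_{2,k} is D-minimal for the Maker–Breaker total domination game: K_{2,k} is a D graph, and for every edge e of K_{2,k} the graph K_{2,k} − e is not a D graph. -/
/-!
Dominator wins on `K_{2,k}` by a pairing strategy: pair the two vertices of the small side, pair
two vertices of the large side, and answer every Staller move on a paired vertex with its
partner. He thus ends up with a vertex on each side, and each side totally dominates the other.

Deleting an edge `uv` with `u` on the small side leaves `v` with a single neighbour. In the
S-game Staller claims that neighbour first, and `v` is never dominated.
-/

namespace MBTD

open Finset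

variable {V : Type*} [DecidableEq V]

/-- A pairing is encoded by an involution `p`, the pairs being `{v, p v}` for `p v ≠ v`. -/
def PairsAnswered (p : V → V) (a b : Finset V) : Prop :=
  ∀ v ∈ b, p v ≠ v → p v ∈ a

variable {p : V → V}

lemma PairsAnswered.insert_left {a b : Finset V} (h : PairsAnswered p a b) (w : V) :
    PairsAnswered p (insert w a) b :=
  fun v hv hpv => mem_insert_of_mem (h v hv hpv)

lemma PairsAnswered.insert_right_of_answered {a b : Finset V} (h : PairsAnswered p a b) {v : V}
    (hv : p v ≠ v → p v ∈ a) : PairsAnswered p a (insert v b) := by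
  intro u hu hpu
  rcases mem_insert.mp hu with rfl | hu
  exacts [hv hpu, h u hu hpu]

lemma PairsAnswered.insert_partner {a b : Finset V} (h : PairsAnswered p a b) (v : V) :
    PairsAnswered p (insert (p v) a) (insert v b) :=
  (h.insert_left _).insert_right_of_answered fun _ => mem_insert_self _ _

variable [Fintype V]

lemma card_univ_sdiff_insert {s : Finset V} {v : V} {n : ℕ} (hv : v ∈ univ \ s)
    (hs : #(univ \ s) = n + 1) : #(univ \ insert v s) = n := by
  rw [sdiff_insert, card_erase_of_mem hv, hs, Nat.add_sub_cancel]

lemma card_univ_sdiff_insert_union {a b : Finset V} {v : V} {n : ℕ} (hv : v ∈ univ \ (a ∪ b))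
    (hab : #(univ \ (a ∪ b)) = n + 1) : #(univ \ (insert v a ∪ b)) = n := by
  rw [insert_union]; exact card_univ_sdiff_insert hv hab

lemma card_univ_sdiff_union_insert {a b : Finset V} {v : V} {n : ℕ} (hv : v ∈ univ \ (a ∪ b))
    (hab : #(univ \ (a ∪ b)) = n + 1) : #(univ \ (a ∪ insert v b)) = n := by
  rw [union_insert]; exact card_univ_sdiff_insert hv hab

lemma nonempty_univ_sdiff_of_card_eq_succ {s : Finset V} {n : ℕ} (hs : #(univ \ s) = n + 1) :
    (univ \ s).Nonempty := by
  rw [← card_pos, hs]; exact n.succ_pos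

lemma mem_union_of_card_univ_sdiff_eq_zero {a b : Finset V} (hab : #(univ \ (a ∪ b)) = 0)
    (v : V) : v ∈ a ∨ v ∈ b :=
  mem_union.mp (sdiff_eq_empty_iff_subset.mp (card_eq_zero.mp hab) (mem_univ v))

lemma PairsAnswered.partner_mem_univ_sdiff (hp : Function.Involutive p) {a b : Finset V}
    (h : PairsAnswered p a b) {v : V} (hv : v ∈ univ \ (a ∪ b)) (hpv : p v ≠ v)
    (hpa : p v ∉ a) : p v ∈ univ \ (a ∪ insert v b) := by
  have hvab : v ∉ a ∧ v ∉ b := by simpa using hv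
  have hpb : p v ∉ b := fun hpb => hvab.1 <| by
    simpa only [hp v] using h (p v) hpb (by rwa [hp v, ne_comm])
  simp [hpa, hpv, hpb]

/-- Pairing strategy: answer every opponent move `v` by `p v`. -/
theorem winsAux_of_pairsAnswered (hp : Function.Involutive p) {W : Finset V → Prop}
    (hW : ∀ a, (∀ v, p v ≠ v → v ∈ a ∨ p v ∈ a) → W a) (n : ℕ) :
    ∀ (turn : Bool) (a b : Finset V), #(univ \ (a ∪ b)) = n → PairsAnswered p a b →
      WinsAux (fun a _ => W a) n turn a b := by
  induction n using Nat.strong_induction_on with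
  | _ n ih =>
  intro turn a b hn h
  match n, turn with
  | 0, _ =>
    refine hW a fun v hpv => ?_
    rcases mem_union_of_card_univ_sdiff_eq_zero hn v with hv | hv
    exacts [Or.inl hv, Or.inr (h v hv hpv)]
  | m + 1, true =>
    obtain ⟨v, hv⟩ := nonempty_univ_sdiff_of_card_eq_succ hn
    exact ⟨v, hv, ih m m.lt_succ_self _ _ _ (card_univ_sdiff_insert_union hv hn)
      (h.insert_left v)⟩
  | m + 1, false =>
    intro v hv
    have hm := card_univ_sdiff_union_insert hv hn
    by_cases hans : p v ≠ v → p v ∈ a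
    · exact ih m m.lt_succ_self _ _ _ hm (h.insert_right_of_answered hans)
    rw [Classical.not_imp] at hans
    have hfree := h.partner_mem_univ_sdiff hp hv hans.1 hans.2
    obtain ⟨l, rfl⟩ : ∃ l, m = l + 1 := Nat.exists_eq_add_one.mpr (hm ▸ card_pos.mpr ⟨_, hfree⟩)
    exact ⟨p v, hfree, ih l (by omega) _ _ _ (card_univ_sdiff_insert_union hfree hm)
      (h.insert_partner v)⟩

theorem isD_of_involutive (G : SimpleGraph V) (hp : Function.Involutive p)
    (hdom : ∀ a, (∀ v, p v ≠ v → v ∈ a ∨ p v ∈ a) → IsTotalDomSet G a) : IsD G := by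
  have hwin (turn : Bool) : WinsAux (fun a _ => IsTotalDomSet G a) (Fintype.card V) turn ∅ ∅ :=
    winsAux_of_pairsAnswered hp hdom _ turn ∅ ∅ (by simp) (by simp [PairsAnswered])
  exact ⟨hwin true, hwin false⟩

theorem not_winsAux_of_mem_right {win : Finset V → Finset V → Prop} {x : V}
    (hx : ∀ a b, win a b → x ∈ a) (n : ℕ) :
    ∀ (turn : Bool) (a b : Finset V), #(univ \ (a ∪ b)) = n → x ∉ a → x ∈ b →
      ¬ WinsAux win n turn a b := by
  induction n with
  | zero => exact fun _ a b _ hxa _ hwin => hxa (hx a b hwin)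
  | succ n ih =>
    rintro (_ | _) a b hn hxa hxb hwin
    · obtain ⟨v, hv⟩ := nonempty_univ_sdiff_of_card_eq_succ hn
      exact ih _ _ _ (card_univ_sdiff_union_insert hv hn) hxa (mem_insert_of_mem hxb)
        (hwin v hv)
    · obtain ⟨v, hv, hwin⟩ := hwin
      have hvx : v ≠ x := by rintro rfl; simp [hxb] at hv
      exact ih _ _ _ (card_univ_sdiff_insert_union hv hn) (by simp [hvx.symm, hxa]) hxb hwin

/-- Staller opens on the only possible neighbour `x` of `w`. -/
theorem not_dominatorWinsMBTD_false_of_adj_eq (G : SimpleGraph V) {x w : V}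
    (hw : ∀ u, G.Adj u w → u = x) : ¬ DominatorWinsMBTD G false := by
  obtain ⟨n, hn⟩ := Nat.exists_eq_add_one.mpr (Fintype.card_pos_iff.mpr ⟨x⟩)
  have hx : x ∈ univ \ ((∅ : Finset V) ∪ ∅) := by simp
  rw [DominatorWinsMBTD, hn]
  intro hwin
  refine not_winsAux_of_mem_right (fun a _ hdom => ?_) n true ∅ {x} ?_ (notMem_empty x)
    (mem_singleton_self x) (hwin x hx)
  · obtain ⟨u, hu, hadj⟩ := hdom w
    rwa [← hw u hadj]
  · simpa [hn] using card_univ_sdiff_union_insert hx (by simp [hn])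

theorem not_isD_of_adj_eq (G : SimpleGraph V) {x w : V} (hw : ∀ u, G.Adj u w → u = x) :
    ¬ IsD G :=
  fun hD => not_dominatorWinsMBTD_false_of_adj_eq G hw hD.2

theorem isD_completeBipartiteGraph {α β : Type*} [Fintype α] [DecidableEq α] [Fintype β]
    [DecidableEq β] [Nontrivial α] [Nontrivial β] : IsD (completeBipartiteGraph α β) := by
  obtain ⟨a₁, a₂, ha⟩ := exists_pair_ne α
  obtain ⟨b₁, b₂, hb⟩ := exists_pair_ne β
  refine isD_of_involutive (p := Sum.map (Equiv.swap a₁ a₂) (Equiv.swap b₁ b₂)) _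
    (by rintro (_ | _) <;> simp [Equiv.swap_apply_self]) fun s hs => ?_
  have hα := hs (Sum.inl a₁) (by simp [Equiv.swap_apply_left, ha.symm])
  have hβ := hs (Sum.inr b₁) (by simp [Equiv.swap_apply_left, hb.symm])
  rintro (_ | _)
  · rcases hβ with h | h <;> exact ⟨_, h, by simp⟩
  · rcases hα with h | h <;> exact ⟨_, h, by simp⟩

lemma completeBipartiteGraph_fin_two_deleteEdges_adj {k : ℕ} {i : Fin 2} {j : Fin k}
    {u : Fin 2 ⊕ Fin k}
    (h : ((completeBipartiteGraph (Fin 2) (Fin k)).deleteEdges {s(Sum.inl i, Sum.inr j)}).Adj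
      u (Sum.inr j)) : u = Sum.inl i.rev := by
  rw [SimpleGraph.deleteEdges_adj] at h
  rcases u with i' | _
  · have hi' : i' ≠ i := by rintro rfl; simp at h
    rw [Sum.inl.injEq, Fin.ext_iff, Fin.val_rev]
    omega
  · simp at h

/-- for `k ≥ 2` the complete bipartite graph `K_{2,k}` is `𝒟`-minimal:
it is a `𝒟` graph, but deleting any edge yields a graph that is not `𝒟`. -/
theorem stmt16 (k : ℕ) (hk : 2 ≤ k) :
    IsD (completeBipartiteGraph (Fin 2) (Fin k)) ∧
    ∀ e ∈ (completeBipartiteGraph (Fin 2) (Fin k)).edgeSet,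
      ¬ IsD ((completeBipartiteGraph (Fin 2) (Fin k)).deleteEdges {e}) := by
  have := Fin.nontrivial_iff_two_le.mpr hk
  refine ⟨isD_completeBipartiteGraph, fun e he => ?_⟩
  induction e using Sym2.ind with
  | _ u v =>
  rw [SimpleGraph.mem_edgeSet] at he
  rcases u with i | j <;> rcases v with i' | j'
  · simp at he
  · exact not_isD_of_adj_eq _ fun _ => completeBipartiteGraph_fin_two_deleteEdges_adj
  · rw [Sym2.eq_swap]
    exact not_isD_of_adj_eq _ fun _ => completeBipartiteGraph_fin_two_deleteEdges_adj
  · simp at he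

end MBTD
end
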